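/- arXiv:2510.01949 — 4 statements merged into one kernel-verified Lean document; each statement's English description precedes it below -/
import Mathlib

section
/- For each k ∈ ℕ and reals r, s > 0 the following holds with B := 4(2s + kr/2)k²/r and α := r/4. Let M be a k-configuration of order n and let X be an available edge of M chosen at random according to a distribution satisfying r·n^{-2} ≤ P[X = e] ≤ s·n^{-2} for every available edge e of M. Let M' be the reduced configuration of the red matching {X}. If R(M) ≥ B, then E[R(M')] ≤ (1 − α/n)·R(M). -/
open scoped Classical

namespace Kotzig

variable {V : Type}

/-- The set of vertices covered by a set of edges. -/
def covered (M : Set (Sym2 V)) : Set V := {v | ∃ e ∈ M, v ∈ e}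

/-- A set of unordered pairs of vertices is a matching: its elements are non-loops and
pairwise vertex-disjoint. -/
def IsMatchingE (M : Set (Sym2 V)) : Prop :=
  (∀ e ∈ M, ¬ e.IsDiag) ∧
    ∀ e ∈ M, ∀ f ∈ M, e ≠ f → ∀ v : V, v ∈ e → v ∉ f

/-- A perfect matching on the vertex set `V`. -/
def IsPerfectMatchingE (M : Set (Sym2 V)) : Prop :=
  IsMatchingE M ∧ ∀ v : V, v ∈ covered M

/-- `M ∪ M'` forms a Hamilton cycle. -/
def UnionHam [Fintype V] (M M' : Set (Sym2 V)) : Prop :=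
  (SimpleGraph.fromEdgeSet (M ∪ M')).IsHamiltonian

/-- A `k`-configuration: `k` perfect matchings (colours) on a common vertex set. -/
def IsConfig {k : ℕ} (Mc : Fin k → Set (Sym2 V)) : Prop :=
  ∀ i, IsPerfectMatchingE (Mc i)

/-- A pair of vertices forms an available edge if it is an edge of none of the matchings. -/
def Available {k : ℕ} (Mc : Fin k → Set (Sym2 V)) (e : Sym2 V) : Prop :=
  ¬ e.IsDiag ∧ ∀ i, e ∉ Mc i

/-- A (partial) red matching of a configuration: a matching of available edges whose union
with each colour contains no cycle. -/
def IsRedMatching {k : ℕ} (Mc : Fin k → Set (Sym2 V)) (M : Set (Sym2 V)) : Prop :=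
  IsMatchingE M ∧ (∀ e ∈ M, Available Mc e) ∧
    ∀ i, (SimpleGraph.fromEdgeSet (M ∪ Mc i)).IsAcyclic

/-- A red perfect matching: a perfect matching forming a Hamilton cycle with each colour. -/
def IsRedPerfectMatching [Fintype V] {k : ℕ} (Mc : Fin k → Set (Sym2 V))
    (M : Set (Sym2 V)) : Prop :=
  IsPerfectMatchingE M ∧ ∀ i, UnionHam M (Mc i)

/-- The colour-`i` matching of the reduced configuration of the red matching `M`, where `Mi`
is the colour-`i` matching: two distinct vertices uncovered by `M` are joined precisely when
the maximal path alternating between `Mi` and `M` starting at one ends at the other,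
equivalently (as `M ∪ Mi` is an acyclic union of a matching and a perfect matching)
when they lie in the same connected component of `Mi ∪ M`. -/
def reducedColour (Mi M : Set (Sym2 V)) : Set (Sym2 V) :=
  {e | ∃ u v : V, e = s(u, v) ∧ u ≠ v ∧ u ∉ covered M ∧ v ∉ covered M ∧
    (SimpleGraph.fromEdgeSet (Mi ∪ M)).Reachable u v}

/-- The total overlap of a configuration: `Σ_{i ≠ j} |M_i ∩ M_j|` over ordered pairs. -/
noncomputable def totalOverlap {k : ℕ} (Mc : Fin k → Set (Sym2 V)) : ℕ :=
  ∑ i : Fin k, ∑ j : Fin k, if i ≠ j then (Mc i ∩ Mc j).ncard else 0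

/-- The total overlap of the reduced configuration of the red matching `M`. -/
noncomputable def reducedOverlap {k : ℕ} (Mc : Fin k → Set (Sym2 V)) (M : Set (Sym2 V)) : ℕ :=
  totalOverlap (fun i => reducedColour (Mc i) M)



/-! ### Auxiliary machinery -/

section Aux

variable [DecidableEq V]

lemma mem_covered_singleton {e : Sym2 V} {x : V} : x ∈ covered {e} ↔ x ∈ e := by
  constructor
  · rintro ⟨f, hf, hx⟩
    rw [Set.mem_singleton_iff] at hf
    rwa [hf] at hx
  · intro h; exact ⟨e, rfl, h⟩

lemma reach_closed {G : SimpleGraph V} {S : Set V}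
    (hS : ∀ x ∈ S, ∀ y, G.Adj x y → y ∈ S) {a b : V} (h : G.Reachable a b)
    (ha : a ∈ S) : b ∈ S := by
  obtain ⟨w⟩ := h
  induction w with
  | nil => exact ha
  | cons h p ih => exact ih (hS _ ha _ h)

lemma matching_eq' {M : Set (Sym2 V)} (hM : IsMatchingE M) {e f : Sym2 V}
    (he : e ∈ M) (hf : f ∈ M) {v : V} (hve : v ∈ e) (hvf : v ∈ f) : e = f := by
  by_contra h
  exact hM.2 e he f hf h v hve hvf

noncomputable def pt (M : Set (Sym2 V)) (hM : IsPerfectMatchingE M) (v : V) : V := by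
  have h : ∃ e ∈ M, v ∈ e := hM.2 v
  exact Sym2.Mem.other' h.choose_spec.2

lemma pt_spec (M : Set (Sym2 V)) (hM : IsPerfectMatchingE M) (v : V) :
    s(v, pt M hM v) ∈ M := by
  have h : ∃ e ∈ M, v ∈ e := hM.2 v
  have := Sym2.other_spec' h.choose_spec.2
  rw [pt]
  simpa [this] using h.choose_spec.1

lemma pt_eq {M : Set (Sym2 V)} (hM : IsPerfectMatchingE M) {v w : V}
    (h : s(v, w) ∈ M) : w = pt M hM v := by
  have h2 := pt_spec M hM v
  have he : s(v, w) = s(v, pt M hM v) :=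
    matching_eq' hM.1 h h2 (Sym2.mem_mk_left v w) (Sym2.mem_mk_left _ _)
  exact Sym2.congr_right.mp he

lemma pt_ne (M : Set (Sym2 V)) (hM : IsPerfectMatchingE M) (v : V) : pt M hM v ≠ v := by
  intro h
  have h2 := pt_spec M hM v
  have := hM.1.1 _ h2
  rw [h] at this
  exact this (Sym2.isDiag_iff_proj_eq.mpr rfl)

lemma pt_pt (M : Set (Sym2 V)) (hM : IsPerfectMatchingE M) (v : V) :
    pt M hM (pt M hM v) = v := by
  have h2 := pt_spec M hM v
  rw [Sym2.eq_swap] at h2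
  exact (pt_eq hM h2).symm

lemma pt_not_endpoint {M : Set (Sym2 V)} (hM : IsPerfectMatchingE M) {u v : V}
    (he : s(u, v) ∉ M) : pt M hM u ≠ u ∧ pt M hM u ≠ v := by
  refine ⟨pt_ne M hM u, fun h => he ?_⟩
  have := pt_spec M hM u
  rwa [h] at this

lemma reducedColour_subset (M : Set (Sym2 V)) (hM : IsPerfectMatchingE M)
    (u v : V) (huv : u ≠ v) (he : s(u, v) ∉ M) :
    reducedColour M {s(u, v)} ⊆
      {f | f ∈ M ∧ u ∉ f ∧ v ∉ f} ∪ {s(pt M hM u, pt M hM v)} := by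
  set σ : V → V := pt M hM with hσ
  have hadj : ∀ x y : V,
      (SimpleGraph.fromEdgeSet (M ∪ {s(u, v)})).Adj x y →
      y = σ x ∨ (x = u ∧ y = v) ∨ (x = v ∧ y = u) := by
    intro x y hxy
    rw [SimpleGraph.fromEdgeSet_adj] at hxy
    rcases hxy.1 with h | h
    · exact Or.inl (pt_eq hM h)
    · rw [Set.mem_singleton_iff, Sym2.eq_iff] at h
      tauto
  rintro f ⟨a, b, hf, hab, haM, hbM, hreach⟩
  rw [mem_covered_singleton, Sym2.mem_iff] at haM hbM
  push_neg at haM hbM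
  by_cases hσa : σ a = u ∨ σ a = v
  · -- a ∈ {σ u, σ v}; component is {σ u, u, v, σ v}
    have hS : ∀ x ∈ ({σ u, u, v, σ v} : Set V), ∀ y,
        (SimpleGraph.fromEdgeSet (M ∪ {s(u, v)})).Adj x y →
        y ∈ ({σ u, u, v, σ v} : Set V) := by
      intro x hx y hxy
      rcases hadj x y hxy with h | ⟨hx1, hy⟩ | ⟨hx1, hy⟩
      · subst h
        rcases hx with hx | hx | hx | hx <;> rw [hx] <;>
          simp [hσ, pt_pt, Set.mem_insert_iff]
      · subst hy; simp [Set.mem_insert_iff]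
      · subst hy; simp [Set.mem_insert_iff]
    have key : ∀ c : V, σ c = u ∨ σ c = v → c ∈ ({σ u, u, v, σ v} : Set V) := by
      intro c hc
      rcases hc with hc | hc
      · have hc2 : c = σ u := by rw [← hc, hσ, pt_pt]
        simp [hc2, Set.mem_insert_iff]
      · have hc2 : c = σ v := by rw [← hc, hσ, pt_pt]
        simp [hc2, Set.mem_insert_iff]
    have haS : a ∈ ({σ u, u, v, σ v} : Set V) := key a hσa
    have hbS : b ∈ ({σ u, u, v, σ v} : Set V) := reach_closed hS hreach haS
    right
    rw [Set.mem_singleton_iff, hf]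
    rcases hσa with hσa | hσa
    · have ha' : a = σ u := by rw [← hσa, hσ, pt_pt]
      have hb' : b = σ v := by
        rcases hbS with hb | hb | hb | hb
        · exact ((hab (ha'.symm ▸ hb : b = a).symm).elim)
        · exact (hbM.1 hb).elim
        · exact (hbM.2 hb).elim
        · exact hb
      rw [ha', hb']
    · have ha' : a = σ v := by rw [← hσa, hσ, pt_pt]
      have hb' : b = σ u := by
        rcases hbS with hb | hb | hb | hb
        · exact hb
        · exact (hbM.1 hb).elim
        · exact (hbM.2 hb).elim
        · exact ((hab (ha'.symm ▸ hb : b = a).symm).elim)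
      rw [ha', hb', Sym2.eq_swap]
  · -- component of a is {a, σ a}
    push_neg at hσa
    have hb : b ∈ ({a, σ a} : Set V) := by
      refine reach_closed (fun x hx y hxy => ?_) hreach (by simp)
      have hx' : x = a ∨ x = σ a := by simpa [Set.mem_insert_iff] using hx
      rcases hadj x y hxy with h | ⟨hx1, hy⟩ | ⟨hx1, hy⟩
      · subst h
        rcases hx' with rfl | hx2
        · right; rfl
        · rw [hx2, hσ, pt_pt]; left; rfl
      · exfalso
        rcases hx' with rfl | hx2
        · exact haM.1 hx1
        · exact hσa.1 (hx2.symm.trans hx1)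
      · exfalso
        rcases hx' with rfl | hx2
        · exact haM.2 hx1
        · exact hσa.2 (hx2.symm.trans hx1)
    left
    have hb' : b = σ a := by
      rcases hb with hb | hb
      · exact (hab hb.symm).elim
      · exact hb
    subst hb'
    refine ⟨hf ▸ pt_spec M hM a, ?_, ?_⟩ <;> rw [hf, Sym2.mem_iff] <;> push_neg
    · exact ⟨fun h => haM.1 h.symm, fun h => hσa.1 h.symm⟩
    · exact ⟨fun h => haM.2 h.symm, fun h => hσa.2 h.symm⟩

lemma sym2_eq_of_mem {x y : V} {e : Sym2 V} (hxy : x ≠ y) (hx : x ∈ e) (hy : y ∈ e) :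
    e = s(x, y) := by
  induction e using Sym2.ind with
  | _ a b =>
    rw [Sym2.mem_iff] at hx hy
    rcases hx with rfl | rfl
    · rcases hy with rfl | rfl
      · exact (hxy rfl).elim
      · rfl
    · rcases hy with rfl | rfl
      · exact Sym2.eq_swap
      · exact (hxy rfl).elim

lemma matching_ncard_le [Fintype V] {M : Set (Sym2 V)} (hM : IsMatchingE M) :
    M.ncard ≤ Fintype.card V := by
  have h : M.ncard ≤ (Set.univ : Set V).ncard := by
    apply Set.ncard_le_ncard_of_injOn (fun f => (Quot.out f).1)
    · intro f _; trivial
    · intro f hf g hg hfg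
      have h' : (Quot.out f).1 = (Quot.out g).1 := hfg
      exact matching_eq' hM hf hg (Sym2.out_fst_mem f) (h'.symm ▸ Sym2.out_fst_mem g)
  rwa [Set.ncard_univ, Nat.card_eq_fintype_card] at h

/-- Lots of available edges meet any given colour edge. -/
lemma avail_count [Fintype V] {k : ℕ} (Mc : Fin k → Set (Sym2 V)) (hMc : IsConfig Mc)
    (i : Fin k) (f : Sym2 V) (hf : f ∈ Mc i) :
    ∃ F : Finset (Sym2 V), (∀ e ∈ F, Available Mc e ∧ ∃ w, w ∈ f ∧ w ∈ e) ∧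
      2 * Fintype.card V ≤ F.card + 2 * (k + 1) := by
  induction f using Sym2.ind with
  | _ x y =>
  have hxy : x ≠ y := fun h => (hMc i).1.1 _ hf (h ▸ Sym2.mk_isDiag_iff.mpr rfl)
  set mkF : V → Finset (Sym2 V) := fun x =>
    (Finset.univ.filter (fun w => w ≠ x ∧ ∀ j, w ≠ pt (Mc j) (hMc j) x)).image
      (fun w => s(x, w)) with hmkF
  have hprop : ∀ x : V, ∀ e ∈ mkF x, Available Mc e ∧ x ∈ e := by
    intro x e he
    rw [hmkF] at he
    simp only [Finset.mem_image, Finset.mem_filter, Finset.mem_univ, true_and] at he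
    obtain ⟨w, ⟨hwx, hwpt⟩, rfl⟩ := he
    refine ⟨⟨fun h => hwx (Sym2.mk_isDiag_iff.mp h).symm,
      fun j hj => hwpt j (pt_eq (hMc j) hj)⟩, Sym2.mem_mk_left x w⟩
  have hcard : ∀ x : V, Fintype.card V ≤ (mkF x).card + (k + 1) := by
    intro x
    rw [hmkF]
    have hinj : Function.Injective (fun w => s(x, w)) := fun a b h => Sym2.congr_right.mp h
    rw [Finset.card_image_of_injective _ hinj]
    have hsplit := Finset.card_filter_add_card_filter_not
      (s := Finset.univ) (p := fun w => w ≠ x ∧ ∀ j, w ≠ pt (Mc j) (hMc j) x)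
    have hbadcard : (Finset.univ.filter
        (fun w => ¬(w ≠ x ∧ ∀ j, w ≠ pt (Mc j) (hMc j) x))).card ≤ k + 1 := by
      have hsub : Finset.univ.filter (fun w => ¬(w ≠ x ∧ ∀ j, w ≠ pt (Mc j) (hMc j) x)) ⊆
          insert x ((Finset.univ : Finset (Fin k)).image (fun j => pt (Mc j) (hMc j) x)) := by
        intro w hw
        simp only [Finset.mem_filter, Finset.mem_univ, true_and, not_and, not_forall,
          ne_eq, not_not] at hw
        by_cases hwx : w = x
        · simp [hwx]
        · obtain ⟨j, hj⟩ := hw hwx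
          simp only [Finset.mem_insert, Finset.mem_image, Finset.mem_univ, true_and]
          exact Or.inr ⟨j, hj.symm⟩
      have h1 := Finset.card_le_card hsub
      have h2 := Finset.card_insert_le x
        ((Finset.univ : Finset (Fin k)).image (fun j => pt (Mc j) (hMc j) x))
      have h3 := Finset.card_image_le (s := (Finset.univ : Finset (Fin k)))
        (f := fun j => pt (Mc j) (hMc j) x)
      simp only [Finset.card_univ, Fintype.card_fin] at h3
      omega
    simp only [Finset.card_univ] at hsplit
    omega
  refine ⟨mkF x ∪ mkF y, ?_, ?_⟩
  · intro e he
    rcases Finset.mem_union.mp he with he | he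
    · exact ⟨(hprop x e he).1, x, Sym2.mem_mk_left x y, (hprop x e he).2⟩
    · exact ⟨(hprop y e he).1, y, Sym2.mem_mk_right x y, (hprop y e he).2⟩
  · have hdisj : Disjoint (mkF x) (mkF y) := by
      rw [Finset.disjoint_left]
      intro e hex hey
      have h1 := hprop x e hex
      have h2 := hprop y e hey
      have : e = s(x, y) := sym2_eq_of_mem hxy h1.2 h2.2
      exact h1.1.2 i (this ▸ hf)
    rw [Finset.card_union_of_disjoint hdisj]
    have := hcard x
    have := hcard y
    omega

/-- The set of "bad" edges for the ordered pair of colours `(i, j)`: those edges whose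
reduction might create a new overlap between colours `i` and `j` which is not compensated
by destroyed overlaps. -/
noncomputable def Bad {k : ℕ} (Mc : Fin k → Set (Sym2 V)) (hMc : IsConfig Mc)
    (i j : Fin k) : Set (Sym2 V) :=
  (Set.range fun u => s(u, pt (Mc i) (hMc i) (pt (Mc j) (hMc j) (pt (Mc i) (hMc i) u)))) ∪
  (Set.range fun u => s(u, pt (Mc j) (hMc j) (pt (Mc i) (hMc i) (pt (Mc j) (hMc j) u)))) ∪
  (Set.range fun u => s(u, pt (Mc j) (hMc j) (pt (Mc i) (hMc i) u)))

lemma ncard_range_le [Fintype V] (f : V → Sym2 V) :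
    (Set.range f).ncard ≤ Fintype.card V := by
  rw [← Set.image_univ]
  calc (f '' Set.univ).ncard ≤ (Set.univ : Set V).ncard :=
        Set.ncard_image_le Set.finite_univ
    _ = Fintype.card V := by rw [Set.ncard_univ, Nat.card_eq_fintype_card]

lemma Bad_ncard [Fintype V] {k : ℕ} (Mc : Fin k → Set (Sym2 V)) (hMc : IsConfig Mc)
    (i j : Fin k) : (Bad Mc hMc i j).ncard ≤ 3 * Fintype.card V := by
  rw [Bad]
  calc _ ≤ _ := Set.ncard_union_le _ _
    _ ≤ _ + _ := Nat.add_le_add (Set.ncard_union_le _ _) (ncard_range_le _)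
    _ ≤ _ := by
        have := ncard_range_le (V := V)
          (fun u => s(u, pt (Mc i) (hMc i) (pt (Mc j) (hMc j) (pt (Mc i) (hMc i) u))))
        have := ncard_range_le (V := V)
          (fun u => s(u, pt (Mc j) (hMc j) (pt (Mc i) (hMc i) (pt (Mc j) (hMc j) u))))
        omega

/-- Overlap edges of the pair `(i, j)` destroyed by reducing along `e`. -/
def Tset {k : ℕ} (Mc : Fin k → Set (Sym2 V)) (i j : Fin k) (e : Sym2 V) :
    Set (Sym2 V) :=
  {f | f ∈ Mc i ∧ f ∈ Mc j ∧ ∃ x, x ∈ e ∧ x ∈ f}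

/-- The key per-edge, per-pair inequality. -/
lemma pair_bound [Fintype V] {k : ℕ} (Mc : Fin k → Set (Sym2 V)) (hMc : IsConfig Mc)
    (i j : Fin k) (u v : V) (hav : Available Mc s(u, v)) :
    2 * (reducedColour (Mc i) {s(u, v)} ∩ reducedColour (Mc j) {s(u, v)}).ncard
      + (Tset Mc i j s(u, v)).ncard
    ≤ 2 * (Mc i ∩ Mc j).ncard +
      4 * (if s(u, v) ∈ Bad Mc hMc i j then 1 else 0) := by
  have huv : u ≠ v := fun h => hav.1 (h ▸ Sym2.mk_isDiag_iff.mpr rfl)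
  set σi := pt (Mc i) (hMc i) with hσi
  set σj := pt (Mc j) (hMc j) with hσj
  set Ni := s(σi u, σi v) with hNi
  set Nj := s(σj u, σj v) with hNj
  set Ri := reducedColour (Mc i) {s(u, v)} with hRi
  set Rj := reducedColour (Mc j) {s(u, v)} with hRj
  set O := Mc i ∩ Mc j with hO
  set T := Tset Mc i j s(u, v) with hT
  have hsub_i := reducedColour_subset (Mc i) (hMc i) u v huv (hav.2 i)
  have hsub_j := reducedColour_subset (Mc j) (hMc j) u v huv (hav.2 j)
  have hTO : T ⊆ O := fun f hf => ⟨hf.1, hf.2.1⟩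
  have hTOcard : T.ncard ≤ O.ncard := Set.ncard_le_ncard hTO (Set.toFinite O)
  have hmain : Ri ∩ Rj ⊆ (O \ T) ∪ (({Ni, Nj} : Set (Sym2 V)) ∩ (Ri ∩ Rj)) := by
    rintro f ⟨hfi, hfj⟩
    by_cases hN : f = Ni ∨ f = Nj
    · right
      refine ⟨?_, hfi, hfj⟩
      rcases hN with h | h <;> simp [h]
    · push_neg at hN
      left
      rcases hsub_i hfi with ⟨hfMi, hfu, hfv⟩ | h
      · rcases hsub_j hfj with ⟨hfMj, -, -⟩ | h
        · refine ⟨⟨hfMi, hfMj⟩, fun hft => ?_⟩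
          obtain ⟨-, -, x, hx1, hx2⟩ := hft
          rw [Sym2.mem_iff] at hx1
          rcases hx1 with rfl | rfl
          · exact hfu hx2
          · exact hfv hx2
        · exact (hN.2 h).elim
      · exact (hN.1 h).elim
  have hdiff : (O \ T).ncard = O.ncard - T.ncard := Set.ncard_diff hTO (Set.toFinite T)
  have hle1 : (Ri ∩ Rj).ncard ≤ (O \ T).ncard +
      (({Ni, Nj} : Set (Sym2 V)) ∩ (Ri ∩ Rj)).ncard :=
    le_trans (Set.ncard_le_ncard hmain (Set.Finite.union (Set.toFinite _) (Set.toFinite _)))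
      (Set.ncard_union_le _ _)
  set g := (({Ni, Nj} : Set (Sym2 V)) ∩ (Ri ∩ Rj)).ncard with hg
  have hgle : g ≤ 2 := by
    calc g ≤ ({Ni, Nj} : Set (Sym2 V)).ncard :=
          Set.ncard_le_ncard Set.inter_subset_left (Set.toFinite _)
      _ ≤ 2 := by
          calc _ ≤ ({Nj} : Set (Sym2 V)).ncard + 1 := Set.ncard_insert_le _ _
            _ ≤ 2 := by rw [Set.ncard_singleton]
  by_cases hgz : g = 0
  · by_cases hbad : s(u, v) ∈ Bad Mc hMc i j
    · rw [if_pos hbad]; omega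
    · rw [if_neg hbad]; omega
  · -- gain occurred
    obtain ⟨f, hfN, hfi, hfj⟩ : ∃ f, f ∈ ({Ni, Nj} : Set (Sym2 V)) ∧ f ∈ Ri ∧ f ∈ Rj := by
      obtain ⟨f, hf⟩ := Set.nonempty_of_ncard_ne_zero hgz
      exact ⟨f, hf.1, hf.2.1, hf.2.2⟩
    have hdicho : s(u, v) ∈ Bad Mc hMc i j ∨ (σi u = σj u ∧ σi v = σj v) := by
      rcases hfN with hfN | hfN
      · -- f = Ni
        rcases hsub_j (hfN ▸ hfj) with ⟨hfMj, -, -⟩ | hNN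
        · -- Ni ∈ Mc j
          have h1 : σi v = σj (σi u) := pt_eq (hMc j) hfMj
          have h2 : v = σi (σj (σi u)) := by rw [← h1, hσi, pt_pt]
          exact Or.inl (Set.mem_union_left _ (Set.mem_union_left _
            ⟨u, by show s(u, σi (σj (σi u))) = s(u, v); rw [← h2]⟩))
        · -- Ni = Nj
          have hNN' : Ni = Nj := hNN
          rw [hNi, hNj, Sym2.eq_iff] at hNN'
          rcases hNN' with ⟨h1, h2⟩ | ⟨h1, h2⟩
          · exact Or.inr ⟨h1, h2⟩
          · have h3 : v = σj (σi u) := by rw [h1, hσj, pt_pt]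
            exact Or.inl (Set.mem_union_right _
              ⟨u, by show s(u, σj (σi u)) = s(u, v); rw [← h3]⟩)
      · -- f = Nj
        rcases hsub_i ((Set.mem_singleton_iff.mp hfN) ▸ hfi) with ⟨hfMi, -, -⟩ | hNN
        · -- Nj ∈ Mc i
          have h1 : σj v = σi (σj u) := pt_eq (hMc i) hfMi
          have h2 : v = σj (σi (σj u)) := by rw [← h1, hσj, pt_pt]
          exact Or.inl (Set.mem_union_left _ (Set.mem_union_right _
            ⟨u, by show s(u, σj (σi (σj u))) = s(u, v); rw [← h2]⟩))
        · -- Nj = Ni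
          have hNN' : Nj = Ni := hNN
          rw [hNi, hNj, Sym2.eq_iff] at hNN'
          rcases hNN' with ⟨h1, h2⟩ | ⟨h1, h2⟩
          · exact Or.inr ⟨h1.symm, h2.symm⟩
          · have h3 : v = σj (σi u) := by rw [← h2, hσj, pt_pt]
            exact Or.inl (Set.mem_union_right _
              ⟨u, by show s(u, σj (σi u)) = s(u, v); rw [← h3]⟩)
    rcases hdicho with hbad | ⟨hal1, hal2⟩
    · rw [if_pos hbad]; omega
    · -- aligned case: two overlap edges are destroyed
      have hσiu := pt_not_endpoint (hMc i) (hav.2 i)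
      have hNiNj : Ni = Nj := by rw [hNi, hNj, hal1, hal2]
      have hg1 : g ≤ 1 := by
        have hps : ({Ni, Nj} : Set (Sym2 V)) = {Ni} := by
          rw [← hNiNj]; exact Set.pair_eq_singleton Ni
        calc g ≤ ({Ni, Nj} : Set (Sym2 V)).ncard :=
              Set.ncard_le_ncard Set.inter_subset_left (Set.toFinite _)
          _ = 1 := by rw [hps, Set.ncard_singleton]
      have hf1 : s(u, σi u) ∈ T :=
        ⟨pt_spec (Mc i) (hMc i) u,
          by rw [show σi u = σj u from hal1]; exact pt_spec (Mc j) (hMc j) u,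
          u, Sym2.mem_mk_left u v, Sym2.mem_mk_left u (σi u)⟩
      have hf2 : s(v, σi v) ∈ T :=
        ⟨pt_spec (Mc i) (hMc i) v,
          by rw [show σi v = σj v from hal2]; exact pt_spec (Mc j) (hMc j) v,
          v, Sym2.mem_mk_right u v, Sym2.mem_mk_left v (σi v)⟩
      have hne : s(u, σi u) ≠ s(v, σi v) := by
        intro h
        rw [Sym2.eq_iff] at h
        rcases h with ⟨h1, -⟩ | ⟨-, h2⟩
        · exact huv h1
        · exact hσiu.2 h2
      have hT2 : 2 ≤ T.ncard := by
        calc 2 = ({s(u, σi u), s(v, σi v)} : Set (Sym2 V)).ncard :=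
              (Set.ncard_pair hne).symm
          _ ≤ T.ncard := Set.ncard_le_ncard
              (Set.insert_subset hf1 (Set.singleton_subset_iff.mpr hf2)) (Set.toFinite T)
      by_cases hbad : s(u, v) ∈ Bad Mc hMc i j
      · rw [if_pos hbad]; omega
      · rw [if_neg hbad]; omega

lemma sum_indicator_eq_ncard {α : Type} [Fintype α] (B : Set α) :
    (∑ x : α, (if x ∈ B then (1 : ℝ) else 0)) = B.ncard := by
  rw [Finset.sum_boole]
  have h : B.toFinset = Finset.univ.filter (· ∈ B) := by ext x; simp
  rw [Set.ncard_eq_toFinset_card', h]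

end Aux

set_option maxHeartbeats 1000000 in
/-- Self-correction of the total overlap: if an available edge `X` is chosen
according to a distribution with `r/n² ≤ P[X = e] ≤ s/n²` for every available edge `e`, and the
total overlap satisfies `R(M) ≥ B := 4(2s + kr/2)k²/r`, then the expected total overlap of the
reduced configuration of `{X}` is at most `(1 - α/n)·R(M)` with `α := r/4`. -/
theorem overlap_self_correcting (k : ℕ) (r s : ℝ) (hr : 0 < r) (hs : 0 < s)
    (V : Type) [Fintype V] [DecidableEq V]
    (Mc : Fin k → Set (Sym2 V)) (hMc : IsConfig Mc)
    (p : Sym2 V → ℝ) (hp0 : ∀ e : Sym2 V, 0 ≤ p e)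
    (hsupp : ∀ e : Sym2 V, ¬ Available Mc e → p e = 0)
    (hsum : (∑ e : Sym2 V, p e) = 1)
    (hlow : ∀ e : Sym2 V, Available Mc e → r / (Fintype.card V : ℝ) ^ 2 ≤ p e)
    (hhigh : ∀ e : Sym2 V, Available Mc e → p e ≤ s / (Fintype.card V : ℝ) ^ 2)
    (hR : 4 * (2 * s + k * r / 2) * k ^ 2 / r ≤ (totalOverlap Mc : ℝ)) :
    (∑ e : Sym2 V, p e * (reducedOverlap Mc {e} : ℝ)) ≤
      (1 - (r / 4) / (Fintype.card V : ℝ)) * (totalOverlap Mc : ℝ) := by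
  classical
  -- the vertex set is nonempty
  have hV : Nonempty V := by
    by_contra hV
    rw [not_nonempty_iff] at hV
    have hz : (∑ e : Sym2 V, p e) = 0 :=
      Finset.sum_eq_zero (fun e _ => ((hV.false (Quot.out e).1)).elim)
    rw [hsum] at hz
    norm_num at hz
  have hn1 : 1 ≤ Fintype.card V := Fintype.card_pos
  have hnR : (0 : ℝ) < (Fintype.card V : ℝ) := by exact_mod_cast hn1
  by_cases hk : k < 2
  · -- degenerate case: no ordered pairs of distinct colours
    have hz : ∀ (Nc : Fin k → Set (Sym2 V)), totalOverlap Nc = 0 := by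
      intro Nc
      apply Finset.sum_eq_zero
      intro i _
      apply Finset.sum_eq_zero
      intro j _
      have hij : i = j := by
        have h1 := i.2
        have h2 := j.2
        exact Fin.ext (by omega)
      rw [if_neg (by simp [hij])]
    have hz2 : ∀ e : Sym2 V, reducedOverlap Mc {e} = 0 := fun e => hz _
    rw [hz Mc]
    simp [hz2]
  · push_neg at hk
    have hk2 : (2 : ℝ) ≤ (k : ℝ) := by exact_mod_cast hk
    set n := Fintype.card V with hn
    set q : ℝ := ((n : ℝ) - 1 - k) * (r / (n : ℝ) ^ 2) with hq
    -- basic facts about R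
    have hR0 : (0 : ℝ) ≤ (totalOverlap Mc : ℝ) := Nat.cast_nonneg _
    rw [div_le_iff₀ hr] at hR
    have hF1 : 8 * s * (k : ℝ) ^ 2 + 2 * (k : ℝ) ^ 3 * r ≤ r * (totalOverlap Mc : ℝ) := by
      nlinarith [hR]
    have hF2 : (totalOverlap Mc : ℝ) ≤ (k : ℝ) ^ 2 * n := by
      have hnat : totalOverlap Mc ≤ k * k * n := by
        calc totalOverlap Mc ≤ ∑ _i : Fin k, ∑ _j : Fin k, n := by
              apply Finset.sum_le_sum
              intro i _
              apply Finset.sum_le_sum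
              intro j _
              split_ifs
              · calc (Mc i ∩ Mc j).ncard ≤ (Mc i).ncard :=
                      Set.ncard_le_ncard Set.inter_subset_left (Set.toFinite _)
                  _ ≤ n := matching_ncard_le (hMc i).1
              · exact Nat.zero_le n
          _ = k * k * n := by
              simp [Finset.sum_const, Finset.card_univ, Nat.mul_assoc]
      calc (totalOverlap Mc : ℝ) ≤ ((k * k * n : ℕ) : ℝ) := by exact_mod_cast hnat
        _ = (k : ℝ) ^ 2 * n := by push_cast; ring
    -- per-pair expectation bound
    have PPE : ∀ i j : Fin k, i ≠ j →
        (∑ e : Sym2 V,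
          p e * ((reducedColour (Mc i) {e} ∩ reducedColour (Mc j) {e}).ncard : ℝ))
        ≤ ((Mc i ∩ Mc j).ncard : ℝ) * (1 - q) + 6 * s * n / (n : ℝ) ^ 2 := by
      intro i j hij
      -- per-edge inequality
      have H1 : ∀ e : Sym2 V,
          p e * (2 * ((reducedColour (Mc i) {e} ∩ reducedColour (Mc j) {e}).ncard : ℝ)
              + ((Tset Mc i j e).ncard : ℝ))
          ≤ p e * (2 * ((Mc i ∩ Mc j).ncard : ℝ)
              + 4 * (if e ∈ Bad Mc hMc i j then (1 : ℝ) else 0)) := by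
        intro e
        induction e using Sym2.ind with
        | _ u v =>
        by_cases hA : Available Mc s(u, v)
        · have hpb := pair_bound Mc hMc i j u v hA
          have hpbR : 2 * ((reducedColour (Mc i) {s(u, v)} ∩
                reducedColour (Mc j) {s(u, v)}).ncard : ℝ)
              + ((Tset Mc i j s(u, v)).ncard : ℝ)
              ≤ 2 * ((Mc i ∩ Mc j).ncard : ℝ)
              + 4 * (if s(u, v) ∈ Bad Mc hMc i j then (1 : ℝ) else 0) := by
            split_ifs with hb
            · rw [if_pos hb] at hpb
              exact_mod_cast hpb
            · rw [if_neg hb] at hpb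
              push_cast at hpb ⊢
              exact_mod_cast hpb
          exact mul_le_mul_of_nonneg_left hpbR (hp0 _)
        · rw [hsupp _ hA, zero_mul, zero_mul]
      have H1sum := Finset.sum_le_sum (fun e (_ : e ∈ Finset.univ) => H1 e)
      -- split both sides
      have hsplitL : (∑ e : Sym2 V,
          p e * (2 * ((reducedColour (Mc i) {e} ∩ reducedColour (Mc j) {e}).ncard : ℝ)
            + ((Tset Mc i j e).ncard : ℝ)))
          = 2 * (∑ e : Sym2 V,
              p e * ((reducedColour (Mc i) {e} ∩ reducedColour (Mc j) {e}).ncard : ℝ))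
            + ∑ e : Sym2 V, p e * ((Tset Mc i j e).ncard : ℝ) := by
        rw [Finset.mul_sum, ← Finset.sum_add_distrib]
        apply Finset.sum_congr rfl
        intro e _
        ring
      have hsplitR : (∑ e : Sym2 V,
          p e * (2 * ((Mc i ∩ Mc j).ncard : ℝ)
            + 4 * (if e ∈ Bad Mc hMc i j then (1 : ℝ) else 0)))
          = 2 * ((Mc i ∩ Mc j).ncard : ℝ)
            + 4 * ∑ e : Sym2 V, p e * (if e ∈ Bad Mc hMc i j then (1 : ℝ) else 0) := by
        calc (∑ e : Sym2 V,
            p e * (2 * ((Mc i ∩ Mc j).ncard : ℝ)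
              + 4 * (if e ∈ Bad Mc hMc i j then (1 : ℝ) else 0)))
            = ∑ e : Sym2 V, (p e * (2 * ((Mc i ∩ Mc j).ncard : ℝ))
              + 4 * (p e * (if e ∈ Bad Mc hMc i j then (1 : ℝ) else 0))) := by
              apply Finset.sum_congr rfl
              intro e _
              ring
          _ = (∑ e : Sym2 V, p e) * (2 * ((Mc i ∩ Mc j).ncard : ℝ))
              + 4 * ∑ e : Sym2 V, p e * (if e ∈ Bad Mc hMc i j then (1 : ℝ) else 0) := by
              rw [Finset.sum_add_distrib, ← Finset.sum_mul, Finset.mul_sum]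
          _ = _ := by rw [hsum, one_mul]
      rw [hsplitL, hsplitR] at H1sum
      -- bound on the bad-edge contribution
      have H2 : (∑ e : Sym2 V, p e * (if e ∈ Bad Mc hMc i j then (1 : ℝ) else 0))
          ≤ s / (n : ℝ) ^ 2 * (3 * n) := by
        have hple : ∀ e : Sym2 V, p e ≤ s / (n : ℝ) ^ 2 := by
          intro e
          by_cases hA : Available Mc e
          · exact hhigh e hA
          · rw [hsupp e hA]; positivity
        calc (∑ e : Sym2 V, p e * (if e ∈ Bad Mc hMc i j then (1 : ℝ) else 0))
            ≤ ∑ e : Sym2 V, s / (n : ℝ) ^ 2 * (if e ∈ Bad Mc hMc i j then (1 : ℝ) else 0) := by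
              apply Finset.sum_le_sum
              intro e _
              apply mul_le_mul_of_nonneg_right (hple e)
              split_ifs <;> norm_num
          _ = s / (n : ℝ) ^ 2 * ((Bad Mc hMc i j).ncard : ℝ) := by
              rw [← Finset.mul_sum, sum_indicator_eq_ncard]
          _ ≤ s / (n : ℝ) ^ 2 * (3 * n) := by
              apply mul_le_mul_of_nonneg_left _ (by positivity)
              exact_mod_cast Bad_ncard Mc hMc i j
      -- lower bound on the destroyed-overlap contribution
      have H3 : 2 * ((n : ℝ) - 1 - k) * (r / (n : ℝ) ^ 2) * ((Mc i ∩ Mc j).ncard : ℝ)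
          ≤ ∑ e : Sym2 V, p e * ((Tset Mc i j e).ncard : ℝ) := by
        have hswap : (∑ e : Sym2 V, p e * ((Tset Mc i j e).ncard : ℝ))
            = ∑ f : Sym2 V, ∑ e : Sym2 V,
                p e * (if f ∈ Tset Mc i j e then (1 : ℝ) else 0) := by
          rw [Finset.sum_comm]
          apply Finset.sum_congr rfl
          intro e _
          rw [← Finset.mul_sum, sum_indicator_eq_ncard]
        rw [hswap]
        have hper : ∀ f : Sym2 V,
            (if f ∈ Mc i ∩ Mc j then 2 * ((n : ℝ) - 1 - k) * (r / (n : ℝ) ^ 2) else 0)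
            ≤ ∑ e : Sym2 V, p e * (if f ∈ Tset Mc i j e then (1 : ℝ) else 0) := by
          intro f
          split_ifs with hf
          · obtain ⟨F, hFprop, hFcard⟩ := avail_count Mc hMc i f hf.1
            have hFr : ∀ e ∈ F, r / (n : ℝ) ^ 2 ≤ p e := fun e he => hlow e (hFprop e he).1
            have step1 : 2 * ((n : ℝ) - 1 - k) * (r / (n : ℝ) ^ 2)
                ≤ (F.card : ℝ) * (r / (n : ℝ) ^ 2) := by
              apply mul_le_mul_of_nonneg_right _ (by positivity)
              have : (2 * n : ℝ) ≤ (F.card : ℝ) + 2 * ((k : ℝ) + 1) := by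
                exact_mod_cast hFcard
              linarith
            have step2 : (F.card : ℝ) * (r / (n : ℝ) ^ 2) ≤ ∑ e ∈ F, p e := by
              have := Finset.card_nsmul_le_sum F p (r / (n : ℝ) ^ 2) hFr
              rwa [nsmul_eq_mul] at this
            have step3 : (∑ e ∈ F, p e)
                ≤ ∑ e : Sym2 V, p e * (if f ∈ Tset Mc i j e then (1 : ℝ) else 0) := by
              have heq : (∑ e ∈ F, p e)
                  = ∑ e ∈ F, p e * (if f ∈ Tset Mc i j e then (1 : ℝ) else 0) := by
                apply Finset.sum_congr rfl
                intro e he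
                have hfT : f ∈ Tset Mc i j e := by
                  obtain ⟨w, hw1, hw2⟩ := (hFprop e he).2
                  exact ⟨hf.1, hf.2, w, hw2, hw1⟩
                rw [if_pos hfT, mul_one]
              rw [heq]
              apply Finset.sum_le_sum_of_subset_of_nonneg (Finset.subset_univ F)
              intro e _ _
              apply mul_nonneg (hp0 e)
              split_ifs <;> norm_num
            linarith
          · apply Finset.sum_nonneg
            intro e _
            apply mul_nonneg (hp0 e)
            split_ifs <;> norm_num
        calc 2 * ((n : ℝ) - 1 - k) * (r / (n : ℝ) ^ 2) * ((Mc i ∩ Mc j).ncard : ℝ)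
            = ∑ f : Sym2 V,
              (if f ∈ Mc i ∩ Mc j then 2 * ((n : ℝ) - 1 - k) * (r / (n : ℝ) ^ 2) else 0) := by
              rw [← sum_indicator_eq_ncard (Mc i ∩ Mc j), Finset.mul_sum]
              apply Finset.sum_congr rfl
              intro f _
              split_ifs <;> ring
          _ ≤ _ := Finset.sum_le_sum (fun f _ => hper f)
      -- combine
      have hSB' : 4 * (∑ e : Sym2 V, p e * (if e ∈ Bad Mc hMc i j then (1 : ℝ) else 0))
          ≤ 12 * s * (n : ℝ) / (n : ℝ) ^ 2 := by
        have h4 : (4 : ℝ) * (s / (n : ℝ) ^ 2 * (3 * n)) = 12 * s * (n : ℝ) / (n : ℝ) ^ 2 := by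
          ring
        linarith [H2]
      have hST' : 2 * (((n : ℝ) - 1 - k) * (r / (n : ℝ) ^ 2) * ((Mc i ∩ Mc j).ncard : ℝ))
          ≤ ∑ e : Sym2 V, p e * ((Tset Mc i j e).ncard : ℝ) := by
        have heq : 2 * (((n : ℝ) - 1 - k) * (r / (n : ℝ) ^ 2) * ((Mc i ∩ Mc j).ncard : ℝ))
            = 2 * ((n : ℝ) - 1 - k) * (r / (n : ℝ) ^ 2) * ((Mc i ∩ Mc j).ncard : ℝ) := by
          ring
        linarith [H3]
      have hgoal : ((Mc i ∩ Mc j).ncard : ℝ) * (1 - q) + 6 * s * n / (n : ℝ) ^ 2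
          = ((Mc i ∩ Mc j).ncard : ℝ)
            - ((n : ℝ) - 1 - k) * (r / (n : ℝ) ^ 2) * ((Mc i ∩ Mc j).ncard : ℝ)
            + 6 * s * n / (n : ℝ) ^ 2 := by
        rw [hq]; ring
      rw [hgoal]
      ring_nf at H1sum hSB' hST' ⊢
      linarith [H1sum, hSB', hST']
    -- sum over ordered pairs
    have hLexp : (∑ e : Sym2 V, p e * (reducedOverlap Mc {e} : ℝ))
        = ∑ i : Fin k, ∑ j : Fin k, (if i ≠ j then
            (∑ e : Sym2 V,
              p e * ((reducedColour (Mc i) {e} ∩ reducedColour (Mc j) {e}).ncard : ℝ))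
          else 0) := by
      have hcast : ∀ e : Sym2 V, (reducedOverlap Mc {e} : ℝ)
          = ∑ i : Fin k, ∑ j : Fin k, (if i ≠ j then
              ((reducedColour (Mc i) {e} ∩ reducedColour (Mc j) {e}).ncard : ℝ) else 0) := by
        intro e
        rw [reducedOverlap, totalOverlap]
        push_cast
        rfl
      calc (∑ e : Sym2 V, p e * (reducedOverlap Mc {e} : ℝ))
          = ∑ e : Sym2 V, ∑ i : Fin k, ∑ j : Fin k, (if i ≠ j then
              p e * ((reducedColour (Mc i) {e} ∩ reducedColour (Mc j) {e}).ncard : ℝ)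
            else 0) := by
            apply Finset.sum_congr rfl
            intro e _
            rw [hcast e, Finset.mul_sum]
            apply Finset.sum_congr rfl
            intro i _
            rw [Finset.mul_sum]
            apply Finset.sum_congr rfl
            intro j _
            rw [mul_ite, mul_zero]
        _ = _ := by
            rw [Finset.sum_comm]
            apply Finset.sum_congr rfl
            intro i _
            rw [Finset.sum_comm]
            apply Finset.sum_congr rfl
            intro j _
            split_ifs with h
            · rfl
            · exact Finset.sum_const_zero
    -- total bound
    have hRsum : (totalOverlap Mc : ℝ)
        = ∑ i : Fin k, ∑ j : Fin k,
            (if i ≠ j then ((Mc i ∩ Mc j).ncard : ℝ) else 0) := by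
      rw [totalOverlap]
      push_cast
      rfl
    have hL : (∑ e : Sym2 V, p e * (reducedOverlap Mc {e} : ℝ))
        ≤ (totalOverlap Mc : ℝ) * (1 - q) + (k : ℝ) ^ 2 * (6 * s * n / (n : ℝ) ^ 2) := by
      rw [hLexp]
      calc (∑ i : Fin k, ∑ j : Fin k, (if i ≠ j then
            (∑ e : Sym2 V,
              p e * ((reducedColour (Mc i) {e} ∩ reducedColour (Mc j) {e}).ncard : ℝ))
          else 0))
          ≤ ∑ i : Fin k, ∑ j : Fin k, (if i ≠ j then
              (((Mc i ∩ Mc j).ncard : ℝ) * (1 - q) + 6 * s * n / (n : ℝ) ^ 2) else 0) := by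
            apply Finset.sum_le_sum
            intro i _
            apply Finset.sum_le_sum
            intro j _
            split_ifs with h
            · exact PPE i j h
            · exact le_refl _
        _ = (∑ i : Fin k, ∑ j : Fin k,
              (if i ≠ j then ((Mc i ∩ Mc j).ncard : ℝ) else 0)) * (1 - q)
            + ∑ i : Fin k, ∑ j : Fin k,
              (if i ≠ j then (6 * s * n / (n : ℝ) ^ 2 : ℝ) else 0) := by
            rw [Finset.sum_mul, ← Finset.sum_add_distrib]
            apply Finset.sum_congr rfl
            intro i _
            rw [Finset.sum_mul, ← Finset.sum_add_distrib]
            apply Finset.sum_congr rfl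
            intro j _
            split_ifs <;> ring
        _ ≤ (totalOverlap Mc : ℝ) * (1 - q) + (k : ℝ) ^ 2 * (6 * s * n / (n : ℝ) ^ 2) := by
            rw [← hRsum]
            apply add_le_add_right
            calc (∑ i : Fin k, ∑ j : Fin k,
                  (if i ≠ j then (6 * s * n / (n : ℝ) ^ 2 : ℝ) else 0))
                ≤ ∑ _i : Fin k, ∑ _j : Fin k, (6 * s * n / (n : ℝ) ^ 2 : ℝ) := by
                  apply Finset.sum_le_sum
                  intro i _
                  apply Finset.sum_le_sum
                  intro j _
                  split_ifs
                  · exact le_refl _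
                  · positivity
              _ = (k : ℝ) ^ 2 * (6 * s * n / (n : ℝ) ^ 2) := by
                  simp [Finset.sum_const, Finset.card_univ]
                  ring
    -- final numeric step
    have key : 6 * (k : ℝ) ^ 2 * s * n + r * (totalOverlap Mc : ℝ) * n / 4
        ≤ ((n : ℝ) - 1 - k) * r * (totalOverlap Mc : ℝ) := by
      have h1 : (0 : ℝ) ≤ (n : ℝ) * (r * (totalOverlap Mc : ℝ)
          - (8 * s * (k : ℝ) ^ 2 + 2 * (k : ℝ) ^ 3 * r)) :=
        mul_nonneg (by linarith) (by linarith)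
      have h2 : (0 : ℝ) ≤ (1 + (k : ℝ)) * r * ((k : ℝ) ^ 2 * n - (totalOverlap Mc : ℝ)) :=
        mul_nonneg (mul_nonneg (by linarith) hr.le) (by linarith)
      have h3 : (0 : ℝ) ≤ r * (k : ℝ) ^ 2 * n * ((k : ℝ) - 2) :=
        mul_nonneg (mul_nonneg (mul_nonneg hr.le (by positivity)) (by linarith)) (by linarith)
      nlinarith [h1, h2, h3]
    have e1 : (1 - r / 4 / (n : ℝ)) * (totalOverlap Mc : ℝ)
        - ((totalOverlap Mc : ℝ) * (1 - q) + (k : ℝ) ^ 2 * (6 * s * n / (n : ℝ) ^ 2))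
        = (((n : ℝ) - 1 - k) * r * (totalOverlap Mc : ℝ)
            - r * (totalOverlap Mc : ℝ) * n / 4 - 6 * (k : ℝ) ^ 2 * s * n) / (n : ℝ) ^ 2 := by
      rw [hq]
      field_simp
      ring
    have e2 : (0 : ℝ) ≤ (((n : ℝ) - 1 - k) * r * (totalOverlap Mc : ℝ)
        - r * (totalOverlap Mc : ℝ) * n / 4 - 6 * (k : ℝ) ^ 2 * s * n) / (n : ℝ) ^ 2 := by
      apply div_nonneg _ (by positivity)
      linarith
    linarith [hL, e1, e2]

end Kotzig
end

section
/- For every real α with 0 < α < 2 there exists a constant c = c(α) such that the following holds. Let n ∈ ℕ, let m < n/2 be a nonnegative integer, set n_t := n − 2t for 0 ≤ t ≤ m, and let r_0, r_1, …, r_m be nonnegative reals and B > 0 such that for each t ∈ [m]: (S1) r_t ≤ r_{t−1} + 2, and (S2) r_t ≤ (1 − α/n_{t−1})·r_{t−1} whenever r_{t−1} ≥ B. Then for each t ∈ [m] one has r_t ≤ c·r_0·(n_t/n)^{α/2} + B + 2, and moreover Σ_{t=0}^{m} r_t/n_t² ≤ c·(r_0/n^{α/2} + B + 2). -/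
open scoped Classical

namespace Kotzig

variable {V : Type}

lemma key_step (α x : ℝ) (hα0 : 0 < α) (hx : 3 ≤ x) :
    1 - α / x ≤ Real.exp (α/(x-2) - α/x) * ((x-2)/x) ^ (α/2 : ℝ) := by
  have hx0 : (0:ℝ) < x := by linarith
  have hx2 : (0:ℝ) < x - 2 := by linarith
  have h1 : 1 - α/x ≤ Real.exp (-(α/x)) := by
    have := Real.add_one_le_exp (-(α/x)); linarith
  refine h1.trans ?_
  rw [Real.rpow_def_of_pos (by positivity), ← Real.exp_add]
  apply Real.exp_le_exp.mpr
  have hlog : Real.log (x/(x-2)) ≤ x/(x-2) - 1 := Real.log_le_sub_one_of_pos (by positivity)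
  have hlog2 : Real.log ((x-2)/x) = - Real.log (x/(x-2)) := by
    rw [← Real.log_inv]; congr 1; field_simp
  have hxx : x/(x-2) - 1 = 2/(x-2) := by field_simp; ring
  have hL : -(2/(x-2)) ≤ Real.log ((x-2)/x) := by rw [hlog2]; linarith [hxx ▸ hlog]
  have h5 : α/2 * (-(2/(x-2))) = -(α/(x-2)) := by field_simp
  have h6 := mul_le_mul_of_nonneg_left hL (le_of_lt (half_pos hα0))
  rw [h5] at h6
  linarith


/-- A deterministic lemma about sequences with a self-correcting drift:
if `r_t ≤ r_{t-1} + 2` always and `r_t ≤ (1 - α/n_{t-1})·r_{t-1}` whenever `r_{t-1} ≥ B`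
(where `n_t = n - 2t`), then `r_t ≤ c·r_0·(n_t/n)^{α/2} + B + 2` for all `t ∈ [m]` and
`Σ_{t=0}^m r_t/n_t² ≤ c·(r_0/n^{α/2} + B + 2)`, with `c` depending only on `α`. -/
theorem sequence_self_correcting (α : ℝ) (hα0 : 0 < α) (hα2 : α < 2) :
    ∃ c : ℝ, 0 < c ∧ ∀ (n m : ℕ), 2 * m < n →
      ∀ (r : ℕ → ℝ) (B : ℝ), 0 < B → (∀ t : ℕ, 0 ≤ r t) →
        (∀ t : ℕ, 1 ≤ t → t ≤ m → r t ≤ r (t - 1) + 2) →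
        (∀ t : ℕ, 1 ≤ t → t ≤ m → B ≤ r (t - 1) →
          r t ≤ (1 - α / ((n : ℝ) - 2 * ((t : ℝ) - 1))) * r (t - 1)) →
        (∀ t : ℕ, 1 ≤ t → t ≤ m →
          r t ≤ c * r 0 * (((n : ℝ) - 2 * (t : ℝ)) / (n : ℝ)) ^ (α / 2) + B + 2) ∧
        (∑ t ∈ Finset.range (m + 1), r t / ((n : ℝ) - 2 * (t : ℝ)) ^ 2) ≤
          c * (r 0 / (n : ℝ) ^ (α / 2) + B + 2) := by
  have hsum : Summable (fun k : ℕ => (k:ℝ) ^ (α/2 - 2 : ℝ)) := by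
    rw [Real.summable_nat_rpow]; linarith
  set K := ∑' k : ℕ, (k:ℝ) ^ (α/2 - 2 : ℝ) with hKdef
  have hK0 : 0 ≤ K := tsum_nonneg (fun k => Real.rpow_nonneg (Nat.cast_nonneg k) _)
  set c₁ := Real.exp α with hc₁def
  have hc₁ : 1 ≤ c₁ := Real.one_le_exp hα0.le
  have hc₁0 : (0:ℝ) < c₁ := Real.exp_pos α
  refine ⟨c₁ * (K + 1), by positivity, ?_⟩
  intro n m hnm r B hB hr0 hS1 hS2
  have hnm' : 2 * m + 1 ≤ n := hnm
  -- n_t as a real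
  set nt : ℕ → ℝ := fun t => (n:ℝ) - 2*t with hntdef
  have hnt1 : ∀ t : ℕ, t ≤ m → (1:ℝ) ≤ nt t := by
    intro t ht
    have : (2*t + 1 : ℕ) ≤ n := by omega
    have := (Nat.cast_le (α := ℝ)).mpr this
    push_cast at this
    simp only [hntdef]; linarith
  have hnt3 : ∀ t : ℕ, t < m → (3:ℝ) ≤ nt t := by
    intro t ht
    have : (2*t + 3 : ℕ) ≤ n := by omega
    have := (Nat.cast_le (α := ℝ)).mpr this
    push_cast at this
    simp only [hntdef]; linarith
  have hn1 : (1:ℝ) ≤ (n:ℝ) := by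
    have : (1:ℕ) ≤ n := by omega
    exact_mod_cast this
  have hn0 : (0:ℝ) < (n:ℝ) := by linarith
  -- the product
  set P : ℕ → ℝ := fun t => ∏ s ∈ Finset.range t, (1 - α / nt s) with hPdef
  have hfac : ∀ s : ℕ, s < m → 0 < 1 - α / nt s ∧ 1 - α / nt s ≤ 1 := by
    intro s hs
    have h3 := hnt3 s hs
    constructor
    · have : α / nt s < 1 := by
        rw [div_lt_one (by linarith)]; linarith
      linarith
    · have : 0 ≤ α / nt s := by positivity
      linarith
  have hP0 : ∀ t : ℕ, t ≤ m → 0 ≤ P t := by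
    intro t ht
    apply Finset.prod_nonneg
    intro s hs
    exact (hfac s (by have := Finset.mem_range.mp hs; omega)).1.le
  -- Stage 1 : r t ≤ max (r 0 * P t) (B + 2)
  have stage1 : ∀ t : ℕ, t ≤ m → r t ≤ max (r 0 * P t) (B + 2) := by
    intro t
    induction t with
    | zero =>
      intro _
      simp only [hPdef, Finset.range_zero, Finset.prod_empty, mul_one]
      exact le_max_left _ _
    | succ t ih =>
      intro ht
      have ht' : t ≤ m := by omega
      have ihm := ih ht'
      by_cases hcase : B ≤ r t
      · have hdrift := hS2 (t+1) (by omega) ht hcase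
        simp only [Nat.add_sub_cancel] at hdrift
        have hx : (n:ℝ) - 2 * (((t:ℕ)+1 : ℕ) - 1 : ℝ) = nt t := by
          push_cast; simp only [hntdef]; ring
        rw [show (((t+1 : ℕ) : ℝ) - 1) = (t:ℝ) by push_cast; ring] at hdrift
        have hf := hfac t (by omega)
        have h7 : r (t+1) ≤ (1 - α / nt t) * max (r 0 * P t) (B + 2) := by
          calc r (t+1) ≤ (1 - α / nt t) * r t := hdrift
          _ ≤ (1 - α / nt t) * max (r 0 * P t) (B + 2) :=
            mul_le_mul_of_nonneg_left ihm hf.1.le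
        rw [mul_max_of_nonneg _ _ hf.1.le] at h7
        refine h7.trans (max_le_max ?_ ?_)
        · have : (1 - α / nt t) * (r 0 * P t) = r 0 * P (t+1) := by
            simp only [hPdef, Finset.prod_range_succ]; ring
          rw [this]
        · nlinarith [hf.1, hf.2, hB]
      · push_neg at hcase
        have := hS1 (t+1) (by omega) ht
        simp only [Nat.add_sub_cancel] at this
        have : r (t+1) ≤ B + 2 := by linarith
        exact this.trans (le_max_right _ _)
  -- Stage 2 : P t ≤ exp(α / nt t) * (nt t / n)^(α/2)
  have stage2 : ∀ t : ℕ, t ≤ m → P t ≤ Real.exp (α / nt t) * (nt t / n) ^ (α/2 : ℝ) := by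
    intro t
    induction t with
    | zero =>
      intro _
      simp only [hPdef, Finset.range_zero, Finset.prod_empty]
      have : nt 0 = (n:ℝ) := by simp [hntdef]
      rw [this, div_self (ne_of_gt hn0), Real.one_rpow, mul_one]
      exact Real.one_le_exp (by positivity)
    | succ t ih =>
      intro ht
      have ht' : t ≤ m := by omega
      have htm : t < m := by omega
      have h3 := hnt3 t htm
      have hnt0 : (0:ℝ) < nt t := by linarith
      have hkey := key_step α (nt t) hα0 h3
      have hsub : nt t - 2 = nt (t+1) := by simp only [hntdef]; push_cast; ring
      rw [hsub] at hkey
      have hPsucc : P (t+1) = P t * (1 - α / nt t) := by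
        simp only [hPdef, Finset.prod_range_succ]
      have hf := hfac t htm
      have hnt10 : (0:ℝ) < nt (t+1) := by have := hnt1 (t+1) ht; linarith
      calc P (t+1) = P t * (1 - α / nt t) := hPsucc
        _ ≤ (Real.exp (α / nt t) * (nt t / n) ^ (α/2 : ℝ)) * (1 - α / nt t) := by
            apply mul_le_mul_of_nonneg_right (ih ht') hf.1.le
        _ ≤ (Real.exp (α / nt t) * (nt t / n) ^ (α/2 : ℝ)) *
              (Real.exp (α / nt (t+1) - α / nt t) * (nt (t+1) / nt t) ^ (α/2 : ℝ)) := by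
            apply mul_le_mul_of_nonneg_left hkey
            positivity
        _ = Real.exp (α / nt (t+1)) * (nt (t+1) / n) ^ (α/2 : ℝ) := by
            have hexp : Real.exp (α / nt t) * Real.exp (α / nt (t+1) - α / nt t)
                = Real.exp (α / nt (t+1)) := by rw [← Real.exp_add]; ring_nf
            have hmul : nt (t+1) / (n:ℝ) = (nt t / n) * (nt (t+1) / nt t) := by
              field_simp
            rw [hmul, Real.mul_rpow (by positivity) (by positivity), ← hexp]
            ring
  -- main pointwise bound
  have hmain : ∀ t : ℕ, t ≤ m → r t ≤ c₁ * r 0 * (nt t / n) ^ (α/2 : ℝ) + B + 2 := by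
    intro t ht
    have h1 := stage1 t ht
    have h2 := stage2 t ht
    have hnt0 : (0:ℝ) < nt t := by have := hnt1 t ht; linarith
    have hX : 0 ≤ (nt t / n) ^ (α/2 : ℝ) := by positivity
    have hexp : Real.exp (α / nt t) ≤ c₁ := by
      rw [hc₁def, Real.exp_le_exp]
      rw [div_le_iff₀ hnt0]
      nlinarith [hnt1 t ht, hα0]
    have hr0P : r 0 * P t ≤ c₁ * r 0 * (nt t / n) ^ (α/2 : ℝ) := by
      calc r 0 * P t ≤ r 0 * (Real.exp (α / nt t) * (nt t / n) ^ (α/2 : ℝ)) :=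
            mul_le_mul_of_nonneg_left h2 (hr0 0)
        _ ≤ r 0 * (c₁ * (nt t / n) ^ (α/2 : ℝ)) := by
            apply mul_le_mul_of_nonneg_left _ (hr0 0)
            exact mul_le_mul_of_nonneg_right hexp hX
        _ = c₁ * r 0 * (nt t / n) ^ (α/2 : ℝ) := by ring
    have hcr : 0 ≤ c₁ * r 0 * (nt t / n) ^ (α/2 : ℝ) :=
      mul_nonneg (mul_nonneg hc₁0.le (hr0 0)) hX
    rcases max_cases (r 0 * P t) (B + 2) with ⟨heq, _⟩ | ⟨heq, _⟩ <;> rw [heq] at h1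
    · linarith
    · linarith
  constructor
  · intro t h1t htm
    have h := hmain t htm
    have hnt0'' : (0:ℝ) < nt t := by have := hnt1 t htm; linarith
    have hX : 0 ≤ (nt t / n) ^ (α/2 : ℝ) := Real.rpow_nonneg (by positivity) _
    have : c₁ * r 0 * (nt t / n) ^ (α/2 : ℝ) ≤ c₁ * (K + 1) * r 0 * (nt t / n) ^ (α/2 : ℝ) := by
      apply mul_le_mul_of_nonneg_right _ hX
      linarith [mul_nonneg (mul_nonneg hc₁0.le hK0) (hr0 0)]
    simp only [hntdef] at h this
    linarith
  · -- the sum bound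
    have hterm : ∀ t ∈ Finset.range (m+1),
        r t / (nt t)^2 ≤ (c₁ * r 0 / (n:ℝ) ^ (α/2 : ℝ) + (B + 2)) * (nt t) ^ (α/2 - 2 : ℝ) := by
      intro t htmem
      have ht : t ≤ m := by have := Finset.mem_range.mp htmem; omega
      have hnt1' := hnt1 t ht
      have hnt0 : (0:ℝ) < nt t := by linarith
      have h := hmain t ht
      have hsq : (0:ℝ) < (nt t)^2 := by positivity
      have hdiv : r t / (nt t)^2 ≤ (c₁ * r 0 * (nt t / n) ^ (α/2 : ℝ) + B + 2) / (nt t)^2 :=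
        div_le_div_of_nonneg_right h hsq.le
      refine hdiv.trans ?_
      have e1 : (nt t / n) ^ (α/2 : ℝ) / (nt t)^2 = (nt t) ^ (α/2 - 2 : ℝ) / (n:ℝ) ^ (α/2 : ℝ) := by
        rw [Real.div_rpow hnt0.le hn0.le, div_div, mul_comm, ← div_div,
          ← Real.rpow_natCast (nt t) 2, ← Real.rpow_sub hnt0]
        norm_num
      have e2 : (B + 2) / (nt t)^2 ≤ (B + 2) * (nt t) ^ (α/2 - 2 : ℝ) := by
        have h1 : (nt t) ^ ((-2 : ℝ)) ≤ (nt t) ^ (α/2 - 2 : ℝ) :=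
          Real.rpow_le_rpow_of_exponent_le hnt1' (by linarith)
        have h2 : (nt t) ^ ((-2 : ℝ)) = 1 / (nt t)^2 := by
          rw [Real.rpow_neg hnt0.le, ← Real.rpow_natCast (nt t) 2]
          norm_num
        rw [div_eq_mul_one_div (B+2) ((nt t)^2), ← h2]
        exact mul_le_mul_of_nonneg_left h1 (by linarith)
      have : (c₁ * r 0 * (nt t / n) ^ (α/2 : ℝ) + B + 2) / (nt t)^2
          = c₁ * r 0 * ((nt t / n) ^ (α/2 : ℝ) / (nt t)^2) + (B + 2) / (nt t)^2 := by
        ring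
      rw [this, e1]
      have hc₁r0 : 0 ≤ c₁ * r 0 := mul_nonneg hc₁0.le (hr0 0)
      have : c₁ * r 0 * ((nt t) ^ (α/2 - 2 : ℝ) / (n:ℝ) ^ (α/2 : ℝ))
          = (c₁ * r 0 / (n:ℝ) ^ (α/2 : ℝ)) * (nt t) ^ (α/2 - 2 : ℝ) := by ring
      rw [this]
      have := e2
      nlinarith [e2]
    have hsum2 : ∑ t ∈ Finset.range (m+1), (nt t) ^ (α/2 - 2 : ℝ) ≤ K := by
      have hcast : ∀ t ∈ Finset.range (m+1), (nt t) ^ (α/2 - 2 : ℝ)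
          = (fun k : ℕ => (k:ℝ) ^ (α/2 - 2 : ℝ)) (n - 2*t) := by
        intro t htmem
        have ht : t ≤ m := by have := Finset.mem_range.mp htmem; omega
        have h2t : 2*t ≤ n := by omega
        simp only [hntdef]
        congr 1
        push_cast [Nat.cast_sub h2t]
        ring
      rw [Finset.sum_congr rfl hcast]
      have hinj : ∀ x ∈ Finset.range (m+1), ∀ y ∈ Finset.range (m+1),
          (fun t => n - 2*t) x = (fun t => n - 2*t) y → x = y := by
        intro x hx y hy hxy
        simp only [Finset.mem_range] at hx hy
        simp only at hxy
        omega
      rw [← Finset.sum_image (s := Finset.range (m+1)) (g := fun t => n - 2*t)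
        (f := fun k : ℕ => (k:ℝ) ^ (α/2 - 2 : ℝ)) hinj]
      exact Summable.sum_le_tsum _ (fun k _ => Real.rpow_nonneg (Nat.cast_nonneg k) _) hsum
    have hstep : ∑ t ∈ Finset.range (m+1), r t / (nt t)^2
        ≤ (c₁ * r 0 / (n:ℝ) ^ (α/2 : ℝ) + (B + 2)) * K := by
      calc ∑ t ∈ Finset.range (m+1), r t / (nt t)^2
          ≤ ∑ t ∈ Finset.range (m+1),
              (c₁ * r 0 / (n:ℝ) ^ (α/2 : ℝ) + (B + 2)) * (nt t) ^ (α/2 - 2 : ℝ) :=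
            Finset.sum_le_sum hterm
        _ = (c₁ * r 0 / (n:ℝ) ^ (α/2 : ℝ) + (B + 2)) *
              ∑ t ∈ Finset.range (m+1), (nt t) ^ (α/2 - 2 : ℝ) := by
            rw [Finset.mul_sum]
        _ ≤ (c₁ * r 0 / (n:ℝ) ^ (α/2 : ℝ) + (B + 2)) * K := by
            apply mul_le_mul_of_nonneg_left hsum2
            have : 0 ≤ c₁ * r 0 / (n:ℝ) ^ (α/2 : ℝ) :=
              div_nonneg (mul_nonneg hc₁0.le (hr0 0)) (Real.rpow_nonneg hn0.le _)
            linarith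
    refine hstep.trans ?_
    have hX : 0 ≤ r 0 / (n:ℝ) ^ (α/2 : ℝ) :=
      div_nonneg (hr0 0) (Real.rpow_nonneg hn0.le _)
    have expand : c₁ * r 0 / (n:ℝ) ^ (α/2 : ℝ) = c₁ * (r 0 / (n:ℝ) ^ (α/2 : ℝ)) := by ring
    rw [expand]
    have hB2 : (0:ℝ) ≤ B + 2 := by linarith
    linarith [mul_nonneg hc₁0.le hX,
      mul_nonneg (mul_nonneg (sub_nonneg.mpr hc₁) hK0) hB2,
      mul_nonneg hc₁0.le hB2,
      mul_nonneg (mul_nonneg hc₁0.le hX) hK0]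

end Kotzig
end

section
/- Let Ω_1, …, Ω_m be finite sets and let X ⊆ Ω_1 × … × Ω_m be nonempty. For x = (x_1, …, x_m) ∈ X and t ∈ [m], let S_t(x) := { z ∈ Ω_t : there exists x' ∈ X with x'_t = z and x'_i = x_i for each i ∈ [t−1] } and s_t(x) := |S_t(x)|. Then |X| ≤ ∏_{t ∈ [m]} ( (1/|X|) · Σ_{x ∈ X} s_t(x) ), i.e., |X| is at most the product over t of the average of s_t over a uniformly random element of X. -/
open scoped Classical

namespace Kotzig

variable {V : Type}

open Finset

lemma sum_inv_fiber_card {α β : Type*} (C : Finset α) (g : α → β) :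
    ∑ x ∈ C, ((C.filter fun y => g y = g x).card : ℝ)⁻¹ = ((C.image g).card : ℝ) := by
  classical
  rw [← Finset.sum_fiberwise_of_maps_to (t := C.image g)
    (fun x hx => Finset.mem_image_of_mem g hx)]
  rw [Finset.card_eq_sum_ones (C.image g)]
  push_cast
  refine Finset.sum_congr rfl fun b hb => ?_
  obtain ⟨x0, hx0, hgx0⟩ := Finset.mem_image.1 hb
  have hne : x0 ∈ C.filter fun y => g y = b := Finset.mem_filter.2 ⟨hx0, hgx0⟩
  have hcard : ((C.filter fun y => g y = b).card : ℝ) ≠ 0 := by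
    have := Finset.card_pos.2 ⟨x0, hne⟩
    positivity
  calc ∑ x ∈ C.filter (fun y => g y = b), ((C.filter fun y => g y = g x).card : ℝ)⁻¹
      = ∑ x ∈ C.filter (fun y => g y = b), ((C.filter fun y => g y = b).card : ℝ)⁻¹ := by
        refine Finset.sum_congr rfl fun x hx => ?_
        rw [(Finset.mem_filter.1 hx).2]
    _ = 1 := by
        rw [Finset.sum_const, nsmul_eq_mul, mul_inv_cancel₀ hcard]

variable {m : ℕ} {Ω : Fin m → Type}

/-- number of values coordinate `t` can take among members of `F` agreeing with `x` below `t`. -/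
noncomputable def sfin (F : Finset (∀ t, Ω t)) (t : Fin m) (x : ∀ t, Ω t) : ℕ :=
  ((F.filter fun y => ∀ i, i < t → y i = x i).image fun y => y t).card

/-- number of members of `F` agreeing with `x` on coordinates below `T`. -/
noncomputable def nfin (F : Finset (∀ t, Ω t)) (T : ℕ) (x : ∀ t, Ω t) : ℕ :=
  (F.filter fun y => ∀ i : Fin m, (i : ℕ) < T → y i = x i).card

lemma sfin_pos {F : Finset (∀ t, Ω t)} {x : ∀ t, Ω t} (hx : x ∈ F) (t : Fin m) :
    0 < sfin F t x := by
  refine Finset.card_pos.2 ⟨x t, Finset.mem_image.2 ⟨x, ?_, rfl⟩⟩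
  exact Finset.mem_filter.2 ⟨hx, fun i _ => rfl⟩

lemma key_identity (F : Finset (∀ t : Fin m, Ω t)) (hF : F.Nonempty) :
    ∀ T, T ≤ m → ∑ x ∈ F, (∏ t ∈ Finset.univ.filter (fun t : Fin m => (t : ℕ) < T),
      (sfin F t x : ℝ)⁻¹) * ((nfin F T x : ℝ))⁻¹ = 1 := by
  intro T
  induction T with
  | zero =>
    intro _
    have h1 : (Finset.univ.filter (fun t : Fin m => (t : ℕ) < 0)) = ∅ := by
      apply Finset.filter_false_of_mem; intro t _; omega
    have h2 : ∀ x : ∀ t, Ω t, nfin F 0 x = F.card := by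
      intro x
      unfold nfin
      rw [Finset.filter_true_of_mem (fun y _ => by intro i hi; omega)]
    have hcard : ((F.card : ℝ)) ≠ 0 := by
      have := Finset.card_pos.2 hF; positivity
    simp only [h1, Finset.prod_empty, h2, one_mul]
    rw [Finset.sum_const, nsmul_eq_mul, mul_inv_cancel₀ hcard]
  | succ T ih =>
    intro hT1
    have hT : T < m := hT1
    have ihe := ih (Nat.le_of_lt hT)
    set τ : Fin m := ⟨T, hT⟩ with hτdef
    -- the key grouping function
    set κ : (∀ t, Ω t) → (∀ t, Ω t) := fun x i => if (i : ℕ) < T then x i else hF.choose i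
      with hκdef
    have hκ : ∀ x y : ∀ t, Ω t, κ y = κ x ↔ ∀ i : Fin m, (i : ℕ) < T → y i = x i := by
      intro x y
      constructor
      · intro h i hi
        have := congrFun h i
        simpa [hκdef, if_pos hi] using this
      · intro h
        funext i
        by_cases hi : (i : ℕ) < T
        · simp [hκdef, if_pos hi, h i hi]
        · simp [hκdef, if_neg hi]
    have hfilter : (Finset.univ.filter fun t : Fin m => (t : ℕ) < T + 1)
        = insert τ (Finset.univ.filter fun t : Fin m => (t : ℕ) < T) := by
      ext t
      simp only [Finset.mem_insert, Finset.mem_filter, Finset.mem_univ, true_and, Fin.ext_iff,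
        hτdef]
      omega
    have hτnot : τ ∉ Finset.univ.filter fun t : Fin m => (t : ℕ) < T := by
      simp [hτdef]
    rw [← ihe]
    -- group both sides by κ-fibers
    rw [← Finset.sum_fiberwise_of_maps_to (t := F.image κ)
      (fun x hx => Finset.mem_image_of_mem κ hx)
      (f := fun x => (∏ t ∈ Finset.univ.filter (fun t : Fin m => (t : ℕ) < T + 1),
        (sfin F t x : ℝ)⁻¹) * ((nfin F (T + 1) x : ℝ))⁻¹)]
    rw [← Finset.sum_fiberwise_of_maps_to (t := F.image κ)
      (fun x hx => Finset.mem_image_of_mem κ hx)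
      (f := fun x => (∏ t ∈ Finset.univ.filter (fun t : Fin m => (t : ℕ) < T),
        (sfin F t x : ℝ)⁻¹) * ((nfin F T x : ℝ))⁻¹)]
    refine Finset.sum_congr rfl fun c hc => ?_
    obtain ⟨x₀, hx₀F, hx₀c⟩ := Finset.mem_image.1 hc
    set C : Finset (∀ t, Ω t) := F.filter fun x => κ x = c with hCdef
    have hx₀C : x₀ ∈ C := Finset.mem_filter.2 ⟨hx₀F, hx₀c⟩
    have hCne : C.Nonempty := ⟨x₀, hx₀C⟩
    -- members of C agree below T
    have hagree : ∀ x ∈ C, ∀ i : Fin m, (i : ℕ) < T → x i = x₀ i := by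
      intro x hx i hi
      have h1 : κ x = κ x₀ := by
        rw [(Finset.mem_filter.1 hx).2, hx₀c]
      exact (hκ x₀ x).1 h1 i hi
    -- the class through any x ∈ C is C itself
    have hclass : ∀ x ∈ C, (F.filter fun y => ∀ i : Fin m, (i : ℕ) < T → y i = x i) = C := by
      intro x hx
      ext y
      simp only [Finset.mem_filter, hCdef]
      constructor
      · rintro ⟨hyF, hy⟩
        refine ⟨hyF, ?_⟩
        rw [← (Finset.mem_filter.1 hx).2]
        exact (hκ x y).2 hy
      · rintro ⟨hyF, hy⟩
        refine ⟨hyF, fun i hi => ?_⟩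
        rw [hagree y (Finset.mem_filter.2 ⟨hyF, hy⟩) i hi, hagree x hx i hi]
    -- (ii) sfin is constant on C for t < T
    have hsfin_const : ∀ x ∈ C, ∀ t : Fin m, (t : ℕ) < T → sfin F t x = sfin F t x₀ := by
      intro x hx t ht
      unfold sfin
      congr 2
      apply Finset.filter_congr
      intro y _
      constructor <;> intro h i hi
      · rw [← hagree x hx i (by have := hi; rw [Fin.lt_def] at this; omega), h i hi]
      · rw [hagree x hx i (by have := hi; rw [Fin.lt_def] at this; omega), h i hi]
    -- (iii) sfin at τ on C
    have hsfinτ : ∀ x ∈ C, sfin F τ x = (C.image fun y => y τ).card := by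
      intro x hx
      unfold sfin
      congr 2
      rw [← hclass x hx]
      apply Finset.filter_congr
      intro y _
      constructor <;> intro h i hi
      · exact h i (by rw [Fin.lt_def]; exact hi)
      · exact h i (by rw [Fin.lt_def] at hi; exact hi)
    -- (iv) nfin T on C
    have hnfinT : ∀ x ∈ C, nfin F T x = C.card := by
      intro x hx; unfold nfin; rw [hclass x hx]
    -- (v) nfin (T+1) on C
    have hnfinT1 : ∀ x ∈ C, nfin F (T + 1) x = (C.filter fun y => y τ = x τ).card := by
      intro x hx
      unfold nfin
      congr 1
      rw [← hclass x hx, Finset.filter_filter]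
      apply Finset.filter_congr
      intro y _
      constructor
      · intro h
        exact ⟨fun i hi => h i (by omega), h τ (by simp [hτdef])⟩
      · rintro ⟨h1, h2⟩ i hi
        by_cases hiT : (i : ℕ) < T
        · exact h1 i hiT
        · have : i = τ := by rw [Fin.ext_iff]; simp [hτdef]; omega
          rw [this]; exact h2
    -- now compute both sides
    have hCcard : ((C.card : ℝ)) ≠ 0 := by
      exact Nat.cast_ne_zero.2 (Finset.card_pos.2 hCne).ne'
    have haim : ((C.image fun y => y τ).card : ℝ) ≠ 0 := by
      have : 0 < (C.image fun y => y τ).card :=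
        Finset.card_pos.2 ⟨x₀ τ, Finset.mem_image_of_mem _ hx₀C⟩
      exact Nat.cast_ne_zero.2 this.ne'
    calc ∑ x ∈ C, (∏ t ∈ Finset.univ.filter (fun t : Fin m => (t : ℕ) < T + 1),
          (sfin F t x : ℝ)⁻¹) * ((nfin F (T + 1) x : ℝ))⁻¹
        = ∑ x ∈ C, ((∏ t ∈ Finset.univ.filter (fun t : Fin m => (t : ℕ) < T),
            (sfin F t x₀ : ℝ)⁻¹) * ((C.image fun y => y τ).card : ℝ)⁻¹)
            * ((C.filter fun y => y τ = x τ).card : ℝ)⁻¹ := by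
          refine Finset.sum_congr rfl fun x hx => ?_
          rw [hfilter, Finset.prod_insert hτnot, hsfinτ x hx, hnfinT1 x hx]
          have : ∏ t ∈ Finset.univ.filter (fun t : Fin m => (t : ℕ) < T),
              (sfin F t x : ℝ)⁻¹ = ∏ t ∈ Finset.univ.filter (fun t : Fin m => (t : ℕ) < T),
              (sfin F t x₀ : ℝ)⁻¹ := by
            refine Finset.prod_congr rfl fun t ht => ?_
            rw [hsfin_const x hx t (Finset.mem_filter.1 ht).2]
          rw [this]; ring
      _ = (∏ t ∈ Finset.univ.filter (fun t : Fin m => (t : ℕ) < T), (sfin F t x₀ : ℝ)⁻¹)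
            * ((C.image fun y => y τ).card : ℝ)⁻¹
            * ∑ x ∈ C, ((C.filter fun y => y τ = x τ).card : ℝ)⁻¹ := by
          rw [Finset.mul_sum]
      _ = ∏ t ∈ Finset.univ.filter (fun t : Fin m => (t : ℕ) < T), (sfin F t x₀ : ℝ)⁻¹ := by
          rw [sum_inv_fiber_card C (fun y => y τ)]
          rw [mul_assoc, inv_mul_cancel₀ haim, mul_one]
      _ = ∑ x ∈ C, (∏ t ∈ Finset.univ.filter (fun t : Fin m => (t : ℕ) < T),
            (sfin F t x : ℝ)⁻¹) * ((nfin F T x : ℝ))⁻¹ := by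
          have hconst : ∀ x ∈ C, (∏ t ∈ Finset.univ.filter (fun t : Fin m => (t : ℕ) < T),
              (sfin F t x : ℝ)⁻¹) * ((nfin F T x : ℝ))⁻¹
              = (∏ t ∈ Finset.univ.filter (fun t : Fin m => (t : ℕ) < T),
                (sfin F t x₀ : ℝ)⁻¹) * ((C.card : ℝ))⁻¹ := by
            intro x hx
            rw [hnfinT x hx]
            congr 1
            refine Finset.prod_congr rfl fun t ht => ?_
            rw [hsfin_const x hx t (Finset.mem_filter.1 ht).2]
          rw [Finset.sum_congr rfl hconst, Finset.sum_const, nsmul_eq_mul,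
            mul_comm (∏ t ∈ Finset.univ.filter (fun t : Fin m => (t : ℕ) < T),
              (sfin F t x₀ : ℝ)⁻¹) ((C.card : ℝ))⁻¹, ← mul_assoc,
            mul_inv_cancel₀ hCcard, one_mul]

lemma sum_prod_inv_eq_one (F : Finset (∀ t : Fin m, Ω t)) (hF : F.Nonempty) :
    ∑ x ∈ F, ∏ t : Fin m, (sfin F t x : ℝ)⁻¹ = 1 := by
  have h := key_identity F hF m le_rfl
  have hfil : (Finset.univ.filter fun t : Fin m => (t : ℕ) < m) = Finset.univ := by
    apply Finset.filter_true_of_mem; intro t _; exact t.isLt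
  rw [hfil] at h
  rw [← h]
  refine Finset.sum_congr rfl fun x hx => ?_
  have h1 : nfin F m x = 1 := by
    unfold nfin
    have heq : (F.filter fun y => ∀ i : Fin m, (i : ℕ) < m → y i = x i) = {x} := by
      ext y
      simp only [Finset.mem_filter, Finset.mem_singleton]
      constructor
      · rintro ⟨_, h2⟩; funext i; exact h2 i i.isLt
      · rintro rfl; exact ⟨hx, fun _ _ => rfl⟩
    rw [heq, Finset.card_singleton]
  rw [h1]; norm_num

lemma main_ineq (F : Finset (∀ t : Fin m, Ω t)) (hF : F.Nonempty) :
    (F.card : ℝ) ≤ ∏ t : Fin m, (∑ x ∈ F, (sfin F t x : ℝ)) / (F.card : ℝ) := by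
  set N : ℝ := (F.card : ℝ) with hNdef
  set A : Fin m → ℝ := fun t => ∑ x ∈ F, (sfin F t x : ℝ) with hAdef
  have hN : (0 : ℝ) < N := by
    rw [hNdef]; exact_mod_cast Finset.card_pos.2 hF
  have hApos : ∀ t, 0 < A t := fun t =>
    Finset.sum_pos (fun x hx => by exact_mod_cast sfin_pos hx t) hF
  have hPpos : 0 < ∏ t : Fin m, A t := Finset.prod_pos fun t _ => hApos t
  set w : ℝ := ((m : ℝ) + 1)⁻¹ with hwdef
  have hw : 0 < w := by rw [hwdef]; positivity
  -- pointwise AM-GM step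
  have hpt : ∀ x ∈ F, ((∏ t : Fin m, A t)⁻¹) ^ w ≤
      (∑ t : Fin m, w * ((sfin F t x : ℝ) / A t)) + w * ∏ t : Fin m, (sfin F t x : ℝ)⁻¹ := by
    intro x hx
    have hsfin0 : ∀ t : Fin m, (0 : ℝ) < (sfin F t x : ℝ) := fun t => by
      exact_mod_cast sfin_pos hx t
    set z : Fin (m + 1) → ℝ :=
      Fin.snoc (fun t => (sfin F t x : ℝ) / A t) (∏ t : Fin m, (sfin F t x : ℝ)⁻¹) with hzdef
    have hznn : ∀ i ∈ (Finset.univ : Finset (Fin (m + 1))), 0 ≤ z i := by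
      intro i _
      induction i using Fin.lastCases with
      | last => rw [hzdef, Fin.snoc_last]; positivity
      | cast j => rw [hzdef, Fin.snoc_castSucc]; positivity
    have hwsum : ∑ _i : Fin (m + 1), w = 1 := by
      rw [Finset.sum_const, Finset.card_univ, Fintype.card_fin, nsmul_eq_mul, hwdef]
      push_cast
      rw [mul_inv_cancel₀ (by positivity)]
    have hgm := Real.geom_mean_le_arith_mean_weighted Finset.univ (fun _ => w) z
      (fun i _ => le_of_lt hw) hwsum hznn
    rw [Fin.prod_univ_castSucc, Fin.sum_univ_castSucc] at hgm
    simp only [hzdef, Fin.snoc_castSucc, Fin.snoc_last] at hgm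
    have hprod : ((∏ t : Fin m, A t)⁻¹) ^ w =
        (∏ t : Fin m, ((sfin F t x : ℝ) / A t) ^ w) *
          (∏ t : Fin m, (sfin F t x : ℝ)⁻¹) ^ w := by
      rw [Real.finset_prod_rpow _ _ (fun t _ => by positivity) w,
        ← Real.mul_rpow (by positivity) (by positivity)]
      congr 1
      rw [← Finset.prod_mul_distrib]
      have : ∀ t ∈ (Finset.univ : Finset (Fin m)),
          ((sfin F t x : ℝ) / A t) * ((sfin F t x : ℝ))⁻¹ = (A t)⁻¹ := by
        intro t _
        field_simp
        rw [← div_div, div_self (ne_of_gt (hsfin0 t))]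
      rw [Finset.prod_congr rfl this]
      exact (Finset.prod_inv_distrib _).symm
    rw [hprod]
    exact hgm
  have hsum := Finset.sum_le_sum hpt
  rw [Finset.sum_const, nsmul_eq_mul] at hsum
  have hrhs : ∑ x ∈ F, ((∑ t : Fin m, w * ((sfin F t x : ℝ) / A t)) +
      w * ∏ t : Fin m, (sfin F t x : ℝ)⁻¹) = 1 := by
    rw [Finset.sum_add_distrib]
    have h1 : ∑ x ∈ F, ∑ t : Fin m, w * ((sfin F t x : ℝ) / A t) = (m : ℝ) * w := by
      rw [Finset.sum_comm]
      have heach : ∀ t ∈ (Finset.univ : Finset (Fin m)),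
          ∑ x ∈ F, w * ((sfin F t x : ℝ) / A t) = w := by
        intro t _
        rw [← Finset.mul_sum, ← Finset.sum_div]
        have hA : ∑ i ∈ F, (sfin F t i : ℝ) = A t := rfl
        rw [hA, div_self (ne_of_gt (hApos t)), mul_one]
      rw [Finset.sum_congr rfl heach, Finset.sum_const, Finset.card_univ, Fintype.card_fin,
        nsmul_eq_mul]
    have h2 : ∑ x ∈ F, w * ∏ t : Fin m, (sfin F t x : ℝ)⁻¹ = w := by
      rw [← Finset.mul_sum, sum_prod_inv_eq_one F hF, mul_one]
    rw [h1, h2, hwdef]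
    field_simp
  rw [hrhs] at hsum
  -- so N * (∏ A)⁻¹ ^ w ≤ 1, hence N ≤ (∏ A) ^ w
  have hNle : N ≤ (∏ t : Fin m, A t) ^ w := by
    have hP : (0 : ℝ) < (∏ t : Fin m, A t) ^ w := Real.rpow_pos_of_pos hPpos w
    have hinv : ((∏ t : Fin m, A t)⁻¹) ^ w = ((∏ t : Fin m, A t) ^ w)⁻¹ :=
      Real.inv_rpow (le_of_lt hPpos) w
    rw [hinv] at hsum
    calc N = N * ((∏ t : Fin m, A t) ^ w)⁻¹ * ((∏ t : Fin m, A t) ^ w) := by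
          field_simp
      _ ≤ 1 * ((∏ t : Fin m, A t) ^ w) := mul_le_mul_of_nonneg_right hsum (le_of_lt hP)
      _ = (∏ t : Fin m, A t) ^ w := one_mul _
  have hpow : N ^ (m + 1) ≤ ((∏ t : Fin m, A t) ^ w) ^ (m + 1) :=
    pow_le_pow_left₀ (le_of_lt hN) hNle (m + 1)
  have heqp : ((∏ t : Fin m, A t) ^ w) ^ (m + 1) = ∏ t : Fin m, A t := by
    rw [← Real.rpow_natCast ((∏ t : Fin m, A t) ^ w) (m + 1),
      ← Real.rpow_mul (le_of_lt hPpos)]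
    have hone : w * ((m + 1 : ℕ) : ℝ) = 1 := by
      rw [hwdef]; push_cast; rw [inv_mul_cancel₀ (by positivity)]
    rw [hone, Real.rpow_one]
  rw [heqp] at hpow
  have hprodform : ∏ t : Fin m, A t / N = (∏ t : Fin m, A t) / N ^ m := by
    rw [Finset.prod_div_distrib, Finset.prod_const, Finset.card_univ, Fintype.card_fin]
  rw [hprodform, le_div_iff₀ (by positivity)]
  calc N * N ^ m = N ^ (m + 1) := by ring
    _ ≤ ∏ t : Fin m, A t := hpow

/-- The entropy-style counting lemma: for a nonempty set `X` of tuples,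
`|X|` is at most the product over the coordinates `t` of the average (over a uniformly random
element `x` of `X`) of the number of values that coordinate `t` can take among elements of `X`
agreeing with `x` on all earlier coordinates. -/
theorem entropy_counting (m : ℕ) (Ω : Fin m → Type)
    [∀ t, Fintype (Ω t)] (X : Set ((t : Fin m) → Ω t)) (hX : X.Nonempty) :
    (X.ncard : ℝ) ≤ ∏ t : Fin m,
      ((∑ x ∈ Finset.univ.filter (· ∈ X),
          (({z : Ω t | ∃ x' ∈ X, x' t = z ∧ ∀ i : Fin m, i < t → x' i = x i}.ncard : ℝ))) /
        (X.ncard : ℝ)) := by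
  set F : Finset ((t : Fin m) → Ω t) := Finset.univ.filter (· ∈ X) with hFdef
  have hFne : F.Nonempty := by
    obtain ⟨x, hx⟩ := hX
    exact ⟨x, by simp [hFdef, hx]⟩
  have hXcard : (X.ncard : ℝ) = (F.card : ℝ) := by
    have hXF : X = ↑F := by ext y; simp [hFdef]
    rw [hXF, Set.ncard_coe_finset]
  have hs : ∀ (t : Fin m) (x : (t : Fin m) → Ω t),
      (({z : Ω t | ∃ x' ∈ X, x' t = z ∧ ∀ i : Fin m, i < t → x' i = x i}.ncard : ℝ))
        = (sfin F t x : ℝ) := by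
    intro t x
    have hset : {z : Ω t | ∃ x' ∈ X, x' t = z ∧ ∀ i : Fin m, i < t → x' i = x i}
        = ↑((F.filter fun y => ∀ i, i < t → y i = x i).image fun y => y t) := by
      ext z
      simp only [Set.mem_setOf_eq, Finset.coe_image, Set.mem_image, Finset.mem_coe,
        Finset.mem_filter, hFdef, Finset.mem_univ, true_and]
      constructor
      · rintro ⟨x', hx', hzt, hagr⟩; exact ⟨x', ⟨hx', hagr⟩, hzt⟩
      · rintro ⟨x', ⟨hx', hagr⟩, hzt⟩; exact ⟨x', hx', hzt, hagr⟩
    rw [hset, Set.ncard_coe_finset]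
    rfl
  rw [hXcard]
  refine le_trans (main_ineq F hFne) (le_of_eq ?_)
  refine Finset.prod_congr rfl fun t _ => ?_
  congr 1
  exact Finset.sum_congr rfl fun x _ => (hs t x).symm

end Kotzig
end

section
/- For every k ∈ ℕ with k ≥ 2 there exist a constant c = c(k) and D_0 = D_0(k) such that for every integer D ≥ D_0 there exists n_0 = n_0(D) such that for all even n ≥ n_0 the following holds. Let M be a k-configuration of order n, let e = ab be an available edge, set m := n/2 − D, let Z be the set of red matchings of M of size m covering neither a nor b, and for a colour i let B^i ⊆ Z be the set of those matchings in which e is i-blocked. Then |B^i| ≤ (c/D)·|Z|. -/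
open scoped Classical

namespace Kotzig

variable {V : Type}

/-- partner uniqueness in a matching -/
lemma IsMatchingE.partner_unique {M : Set (Sym2 V)} (hM : IsMatchingE M) {x u w : V}
    (hu : s(x, u) ∈ M) (hw : s(x, w) ∈ M) : u = w := by
  by_cases h : (s(x, u) : Sym2 V) = s(x, w)
  · rw [Sym2.eq_iff] at h
    rcases h with ⟨-, h⟩ | ⟨h1, h2⟩
    · exact h
    · rw [h2, ← h1]
  · exact absurd (Sym2.mem_mk_left x w) (hM.2 _ hu _ hw h x (Sym2.mem_mk_left x u))

lemma mem_covered_iff {M : Set (Sym2 V)} {v : V} : v ∈ covered M ↔ ∃ w, s(v, w) ∈ M := by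
  constructor
  · rintro ⟨e, he, hv⟩
    induction e with
    | h x y =>
      rw [Sym2.mem_iff] at hv
      rcases hv with rfl | rfl
      · exact ⟨y, he⟩
      · exact ⟨x, by rwa [Sym2.eq_swap]⟩
  · rintro ⟨w, hw⟩
    exact ⟨s(v, w), hw, Sym2.mem_mk_left v w⟩

/-- uncovered vertices have at most one neighbour in the union of a matching
with another matching -/
lemma leaf_of_uncovered {N P : Set (Sym2 V)} (hN : IsMatchingE N) (hP : IsMatchingE P)
    {x : V} (hx : x ∉ covered N) :
    ∀ w₁ w₂, (SimpleGraph.fromEdgeSet (N ∪ P)).Adj x w₁ →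
      (SimpleGraph.fromEdgeSet (N ∪ P)).Adj x w₂ → w₁ = w₂ := by
  intro w₁ w₂ h₁ h₂
  rw [SimpleGraph.fromEdgeSet_adj] at h₁ h₂
  rcases h₁.1 with h₁' | h₁'
  · exact absurd (mem_covered_iff.2 ⟨w₁, h₁'⟩) hx
  rcases h₂.1 with h₂' | h₂'
  · exact absurd (mem_covered_iff.2 ⟨w₂, h₂'⟩) hx
  exact hP.partner_unique h₁' h₂'

/-- in a union of two matchings every vertex has at most two neighbours -/
lemma max_deg_two {N P : Set (Sym2 V)} (hN : IsMatchingE N) (hP : IsMatchingE P) :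
    ∀ v w₁ w₂ w₃, (SimpleGraph.fromEdgeSet (N ∪ P)).Adj v w₁ →
      (SimpleGraph.fromEdgeSet (N ∪ P)).Adj v w₂ →
      (SimpleGraph.fromEdgeSet (N ∪ P)).Adj v w₃ →
      w₁ = w₂ ∨ w₁ = w₃ ∨ w₂ = w₃ := by
  intro v w₁ w₂ w₃ h₁ h₂ h₃
  rw [SimpleGraph.fromEdgeSet_adj] at h₁ h₂ h₃
  rcases h₁.1 with h₁' | h₁' <;> rcases h₂.1 with h₂' | h₂' <;> rcases h₃.1 with h₃' | h₃'
  · exact Or.inl (hN.partner_unique h₁' h₂')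
  · exact Or.inl (hN.partner_unique h₁' h₂')
  · exact Or.inr (Or.inl (hN.partner_unique h₁' h₃'))
  · exact Or.inr (Or.inr (hP.partner_unique h₂' h₃'))
  · exact Or.inr (Or.inr (hN.partner_unique h₂' h₃'))
  · exact Or.inr (Or.inl (hP.partner_unique h₁' h₃'))
  · exact Or.inl (hP.partner_unique h₁' h₂')
  · exact Or.inl (hP.partner_unique h₁' h₂')

/-- walk-based auxiliary lemma: two paths to two distinct "leaves" entered via an
extra back edge is impossible in a max-degree-two graph -/
lemma aux_leaf {G : SimpleGraph V}
    (hmax : ∀ v w₁ w₂ w₃, G.Adj v w₁ → G.Adj v w₂ → G.Adj v w₃ → w₁ = w₂ ∨ w₁ = w₃ ∨ w₂ = w₃)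
    {y z : V} (hy : ∀ w₁ w₂, G.Adj y w₁ → G.Adj y w₂ → w₁ = w₂)
    (hz : ∀ w₁ w₂, G.Adj z w₁ → G.Adj z w₂ → w₁ = w₂) (hyz : y ≠ z) :
    ∀ (w : V) (P : G.Walk w y) (b : V) (Q : G.Walk w z), G.Adj b w → P.IsPath → Q.IsPath →
      b ∉ P.support → b ∉ Q.support → False := by
  intro w P
  induction P with
  | nil =>
    intro b Q hb _ hQ hbP hbQ
    cases Q with
    | nil => exact hyz rfl
    | cons h' Q' =>
      have hb' := hy b _ hb.symm h'
      refine hbQ ?_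
      rw [SimpleGraph.Walk.support_cons]
      exact List.mem_cons_of_mem _ (hb' ▸ Q'.start_mem_support)
  | @cons w u₁ _ h P' ih =>
    intro b Q hb hP hQ hbP hbQ
    cases Q with
    | nil =>
      have hb' := hz b u₁ hb.symm h
      refine hbP ?_
      rw [SimpleGraph.Walk.support_cons]
      exact List.mem_cons_of_mem _ (hb' ▸ P'.start_mem_support)
    | @cons _ u₂ _ h₂ Q' =>
      have hu₁b : u₁ ≠ b := by
        intro hh
        refine hbP ?_
        rw [SimpleGraph.Walk.support_cons]
        exact List.mem_cons_of_mem _ (hh ▸ P'.start_mem_support)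
      have hu₂b : u₂ ≠ b := by
        intro hh
        refine hbQ ?_
        rw [SimpleGraph.Walk.support_cons]
        exact List.mem_cons_of_mem _ (hh ▸ Q'.start_mem_support)
      have he : u₁ = u₂ := by
        rcases hmax w u₁ u₂ b h h₂ hb.symm with h' | h' | h'
        · exact h'
        · exact absurd h' hu₁b
        · exact absurd h' hu₂b
      subst he
      exact ih hy hyz w Q' h
        ((SimpleGraph.Walk.cons_isPath_iff _ _).1 hP).1
        ((SimpleGraph.Walk.cons_isPath_iff _ _).1 hQ).1
        ((SimpleGraph.Walk.cons_isPath_iff _ _).1 hP).2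
        ((SimpleGraph.Walk.cons_isPath_iff _ _).1 hQ).2

/-- three distinct pairwise-reachable leaves are impossible in a max-degree-two graph -/
lemma three_leaves {G : SimpleGraph V}
    (hmax : ∀ v w₁ w₂ w₃, G.Adj v w₁ → G.Adj v w₂ → G.Adj v w₃ → w₁ = w₂ ∨ w₁ = w₃ ∨ w₂ = w₃)
    {x y z : V} (hx : ∀ w₁ w₂, G.Adj x w₁ → G.Adj x w₂ → w₁ = w₂)
    (hy : ∀ w₁ w₂, G.Adj y w₁ → G.Adj y w₂ → w₁ = w₂)
    (hz : ∀ w₁ w₂, G.Adj z w₁ → G.Adj z w₂ → w₁ = w₂)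
    (hxy : x ≠ y) (hxz : x ≠ z) (hyz : y ≠ z)
    (hrxy : G.Reachable x y) (hrxz : G.Reachable x z) : False := by
  obtain ⟨P⟩ := hrxy
  obtain ⟨Q⟩ := hrxz
  have hP := P.toPath.2
  have hQ := Q.toPath.2
  set P' : G.Walk x y := P.toPath.1 with hP'def
  set Q' : G.Walk x z := Q.toPath.1 with hQ'def
  clear_value P' Q'
  cases P' with
  | nil => exact hxy rfl
  | cons h₁ P₁ =>
    cases Q' with
    | nil => exact hxz rfl
    | cons h₂ Q₁ =>
      have : _ = _ := hx _ _ h₁ h₂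
      subst this
      exact aux_leaf hmax hy hz hyz _ P₁ x Q₁ h₁ 
        ((SimpleGraph.Walk.cons_isPath_iff _ _).1 hP).1
        ((SimpleGraph.Walk.cons_isPath_iff _ _).1 hQ).1
        ((SimpleGraph.Walk.cons_isPath_iff _ _).1 hP).2
        ((SimpleGraph.Walk.cons_isPath_iff _ _).1 hQ).2

/-- a closed pair: if all neighbours of b are q and vice versa, reachability stays in {b,q} -/
lemma closed_pair {G : SimpleGraph V} {b q : V}
    (hb : ∀ w, G.Adj b w → w = q) (hq : ∀ w, G.Adj q w → w = b) :
    ∀ {u v : V}, G.Reachable u v → (u = b ∨ u = q) → (v = b ∨ v = q) := by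
  intro u v hr hu
  obtain ⟨W⟩ := hr
  induction W with
  | nil => exact hu
  | cons h W ih =>
    apply ih
    rcases hu with rfl | rfl
    · exact Or.inr (hb _ h)
    · exact Or.inl (hq _ h)

/-- decomposition of reachability after adding one edge -/
lemma reachable_add_edge {G : SimpleGraph V} {u v : V} :
    ∀ {s t : V}, (G ⊔ SimpleGraph.fromEdgeSet {s(u, v)}).Reachable s t →
      G.Reachable s t ∨ (G.Reachable s u ∧ G.Reachable v t) ∨
        (G.Reachable s v ∧ G.Reachable u t) := by
  intro s t hr
  obtain ⟨W⟩ := hr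
  induction W with
  | nil => exact Or.inl (SimpleGraph.Reachable.refl _)
  | @cons a c _ h W ih =>
    have hadj : G.Adj a c ∨ (a = u ∧ c = v) ∨ (a = v ∧ c = u) := by
      rcases h with h | h
      · exact Or.inl h
      · rw [SimpleGraph.fromEdgeSet_adj, Set.mem_singleton_iff, Sym2.eq_iff] at h
        tauto
    rcases hadj with h' | ⟨ha, hc⟩ | ⟨ha, hc⟩
    · rcases ih with h'' | ⟨h1, h2⟩ | ⟨h1, h2⟩
      · exact Or.inl (h'.reachable.trans h'')
      · exact Or.inr (Or.inl ⟨h'.reachable.trans h1, h2⟩)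
      · exact Or.inr (Or.inr ⟨h'.reachable.trans h1, h2⟩)
    · subst ha; subst hc
      rcases ih with h'' | ⟨h1, h2⟩ | ⟨h1, h2⟩
      · exact Or.inr (Or.inl ⟨SimpleGraph.Reachable.refl _, h''⟩)
      · exact Or.inl (h1.symm.trans h2)
      · exact Or.inl h2
    · subst ha; subst hc
      rcases ih with h'' | ⟨h1, h2⟩ | ⟨h1, h2⟩
      · exact Or.inr (Or.inr ⟨SimpleGraph.Reachable.refl _, h''⟩)
      · exact Or.inl h2
      · exact Or.inl (h1.symm.trans h2)

/-- acyclicity is preserved under subgraphs -/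
lemma isAcyclic_mono {G H : SimpleGraph V} (hHG : H ≤ G) (hG : G.IsAcyclic) : H.IsAcyclic := by
  intro w c hc
  exact hG (c.transfer G (fun e he => SimpleGraph.edgeSet_mono hHG (c.edges_subset_edgeSet he)))
    (hc.transfer _)

/-- adding an edge between two non-connected vertices preserves acyclicity -/
lemma isAcyclic_add_edge {G : SimpleGraph V} {u v : V} (hG : G.IsAcyclic)
    (huv : ¬ G.Reachable u v) :
    (G ⊔ SimpleGraph.fromEdgeSet {s(u, v)}).IsAcyclic := by
  rw [SimpleGraph.isAcyclic_iff_forall_adj_isBridge]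
  intro x y hxy
  rw [SimpleGraph.isBridge_iff]
  intro hreach
  by_cases hcase : (s(x, y) : Sym2 V) = s(u, v)
  · have hle : (G ⊔ SimpleGraph.fromEdgeSet {s(u, v)}) \ SimpleGraph.fromEdgeSet {s(x, y)} ≤ G := by
      intro p q hpq
      rw [SimpleGraph.sdiff_adj, SimpleGraph.sup_adj] at hpq
      rcases hpq.1 with h | h
      · exact h
      · exact absurd (by rw [hcase]; exact h) hpq.2
    have : G.Reachable x y := hreach.mono hle
    rw [Sym2.eq_iff] at hcase
    rcases hcase with ⟨rfl, rfl⟩ | ⟨rfl, rfl⟩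
    · exact huv this
    · exact huv this.symm
  · have hxyG : G.Adj x y := by
      rcases hxy with h | h
      · exact h
      · rw [SimpleGraph.fromEdgeSet_adj, Set.mem_singleton_iff] at h
        exact absurd h.1 hcase
    have hbr := (SimpleGraph.isAcyclic_iff_forall_adj_isBridge.1 hG) hxyG
    rw [SimpleGraph.isBridge_iff] at hbr
    have hle : (G ⊔ SimpleGraph.fromEdgeSet {s(u, v)}) \ SimpleGraph.fromEdgeSet {s(x, y)} ≤
        (G \ SimpleGraph.fromEdgeSet {s(x, y)}) ⊔ SimpleGraph.fromEdgeSet {s(u, v)} := by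
      intro p q hpq
      rw [SimpleGraph.sdiff_adj, SimpleGraph.sup_adj] at hpq
      rw [SimpleGraph.sup_adj, SimpleGraph.sdiff_adj]
      tauto
    have hK : ¬ (G \ SimpleGraph.fromEdgeSet {s(x, y)}).Reachable u v := by
      intro h
      exact huv (h.mono (sdiff_le))
    have hKxy := hbr
    rcases reachable_add_edge (hreach.mono hle) with h | ⟨h1, h2⟩ | ⟨h1, h2⟩
    · exact hKxy h
    · exact huv (((h1.mono sdiff_le).symm.trans hxyG.reachable).trans (h2.mono sdiff_le).symm)
    · exact huv ((((h1.mono sdiff_le).symm.trans hxyG.reachable).trans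
        (h2.mono sdiff_le).symm).symm)

/-- the unique edge of a matching at a vertex -/
lemma IsMatchingE.edge_eq {M : Set (Sym2 V)} (hM : IsMatchingE M) {x u : V}
    (hu : s(x, u) ∈ M) {e : Sym2 V} (he : e ∈ M) (hx : x ∈ e) : e = s(x, u) := by
  obtain ⟨w, rfl⟩ := Sym2.mem_iff_exists.1 hx
  rw [hM.partner_unique he hu]

lemma IsMatchingE.mono {M N : Set (Sym2 V)} (h : N ⊆ M) (hM : IsMatchingE M) :
    IsMatchingE N :=
  ⟨fun e he => hM.1 e (h he), fun e he f hf hne v hv => hM.2 e (h he) f (h hf) hne v hv⟩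

lemma covered_mono {M N : Set (Sym2 V)} (h : N ⊆ M) : covered N ⊆ covered M :=
  fun _ ⟨e, he, hv⟩ => ⟨e, h he, hv⟩

lemma covered_insert (e : Sym2 V) (M : Set (Sym2 V)) :
    covered (insert e M) = {v | v ∈ e} ∪ covered M := by
  ext v
  constructor
  · rintro ⟨f, hf, hv⟩
    rcases hf with rfl | hf
    · exact Or.inl hv
    · exact Or.inr ⟨f, hf, hv⟩
  · rintro (hv | ⟨f, hf, hv⟩)
    · exact ⟨e, Set.mem_insert _ _, hv⟩
    · exact ⟨f, Set.mem_insert_of_mem _ hf, hv⟩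

/-- a matching of `m` edges covers `2 m` vertices -/
lemma ncard_covered_of_matching [Fintype V] {M : Set (Sym2 V)} (hM : IsMatchingE M) :
    (covered M).ncard = 2 * M.ncard := by
  refine Set.Finite.induction_on
    (motive := fun s _ => IsMatchingE s → (covered s).ncard = 2 * s.ncard)
    M (Set.toFinite M) (fun _ => by simp [covered]) ?_ hM
  intro e s hes hsfin ih hMs
  have hms : IsMatchingE s := IsMatchingE.mono (Set.subset_insert _ _) hMs
  rw [covered_insert, Set.ncard_insert_of_notMem hes (Set.toFinite _)]
  have hdisj : Disjoint {v | v ∈ e} (covered s) := by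
    rw [Set.disjoint_left]
    rintro v hv ⟨f, hf, hvf⟩
    have hef : e ≠ f := fun h => hes (h ▸ hf)
    exact hMs.2 e (Set.mem_insert _ _) f (Set.mem_insert_of_mem _ hf) hef v hv hvf
  rw [Set.ncard_union_eq hdisj (Set.toFinite _) (Set.toFinite _), ih hms]
  have h2 : {v | v ∈ e}.ncard = 2 := by
    induction e with
    | h x y =>
      have hxy : x ≠ y := by
        intro h
        exact hMs.1 _ (Set.mem_insert _ _) (by simp [h, Sym2.mk_isDiag_iff])
      have hset : {v | v ∈ (s(x, y) : Sym2 V)} = {x, y} := by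
        ext v; simp [Sym2.mem_iff]
      rw [hset, Set.ncard_pair hxy]
  rw [h2]
  ring

/-- key forward structure: if `ab` is blocked in colour `i`, then the `Mᵢ`-partner `q` of `b`
is covered by `M`, say by the edge `pq`, and after deleting `pq`, `a` is still reachable
from `p`. -/
lemma forward_structure {k : ℕ} {Mc : Fin k → Set (Sym2 V)} {i : Fin k}
    (hMi : IsMatchingE (Mc i)) {M : Set (Sym2 V)}
    (hM : IsMatchingE M) (hacyc : (SimpleGraph.fromEdgeSet (M ∪ Mc i)).IsAcyclic)
    {a b q : V} (hab : a ≠ b) (ha : a ∉ covered M) (hb : b ∉ covered M)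
    (hnotMi : s(a, b) ∉ Mc i) (hqb : s(b, q) ∈ Mc i)
    (hblock : (SimpleGraph.fromEdgeSet (M ∪ Mc i)).Reachable a b) :
    ∃ p, s(p, q) ∈ M ∧
      (SimpleGraph.fromEdgeSet ((M \ {s(p, q)}) ∪ Mc i)).Reachable a p := by
  classical
  set G := SimpleGraph.fromEdgeSet (M ∪ Mc i) with hGdef
  have hqb' : q ≠ b := by
    intro h
    exact hMi.1 _ hqb (by simp [h, Sym2.mk_isDiag_iff])
  have hqa : q ≠ a := by
    intro h
    subst h
    exact hnotMi (by rwa [Sym2.eq_swap])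
  -- b has a unique neighbour, namely q
  have hbnb : ∀ w, G.Adj b w → w = q := by
    intro w hw
    rw [hGdef, SimpleGraph.fromEdgeSet_adj] at hw
    rcases hw.1 with h | h
    · exact absurd (mem_covered_iff.2 ⟨w, h⟩) hb
    · exact hMi.partner_unique h hqb
  -- q is covered by M
  have hqcov : q ∈ covered M := by
    by_contra hqcov
    have hreach_aq : G.Reachable a q := by
      refine hblock.trans (SimpleGraph.Adj.reachable ?_)
      rw [hGdef, SimpleGraph.fromEdgeSet_adj]
      exact ⟨Or.inr hqb, Ne.symm hqb'⟩
    exact three_leaves (max_deg_two hM hMi)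
      (leaf_of_uncovered hM hMi ha) (leaf_of_uncovered hM hMi hb)
      (leaf_of_uncovered hM hMi hqcov) hab (Ne.symm hqa) (Ne.symm hqb')
      hblock hreach_aq
  obtain ⟨p, hp⟩ := mem_covered_iff.1 hqcov
  have hpq : s(p, q) ∈ M := by rwa [Sym2.eq_swap] at hp
  refine ⟨p, hpq, ?_⟩
  -- q's neighbours in G are exactly b and p
  have hqnb : ∀ w, G.Adj q w → w = b ∨ w = p := by
    intro w hw
    rw [hGdef, SimpleGraph.fromEdgeSet_adj] at hw
    rcases hw.1 with h | h
    · exact Or.inr (hM.partner_unique h hp)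
    · exact Or.inl (hMi.partner_unique h (by rwa [Sym2.eq_swap] at hqb))
  -- analyse a path from b to a
  obtain ⟨P0⟩ := hblock
  have hRpath := P0.reverse.toPath.2
  set R : G.Walk b a := P0.reverse.toPath.1 with hRdef
  clear_value R
  cases R with
  | nil => exact absurd rfl hab
  | cons h₁ R₁ =>
    rename_i w₁
    have hw₁ : w₁ = q := hbnb w₁ h₁
    cases R₁ with
    | nil => exact (hqa hw₁.symm).elim
    | cons h₂ R₂ =>
      rename_i x
      have h₂' : G.Adj q x := hw₁ ▸ h₂
      have hbR : b ∉ (SimpleGraph.Walk.cons h₂ R₂).support :=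
        ((SimpleGraph.Walk.cons_isPath_iff _ _).1 hRpath).2
      have hRp' := ((SimpleGraph.Walk.cons_isPath_iff _ _).1 hRpath).1
      have hqR : q ∉ R₂.support :=
        hw₁ ▸ ((SimpleGraph.Walk.cons_isPath_iff _ _).1 hRp').2
      have hx : p = x := by
        rcases hqnb x h₂' with h | h
        · exfalso
          apply hbR
          rw [SimpleGraph.Walk.support_cons]
          exact List.mem_cons_of_mem _ (h ▸ R₂.start_mem_support)
        · exact h.symm
      subst hx
      -- transfer R₂ to the deleted graph
      have htrans : ∀ e ∈ R₂.edges,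
          e ∈ (SimpleGraph.fromEdgeSet ((M \ {s(p, q)}) ∪ Mc i)).edgeSet := by
        intro e he
        have heG : e ∈ G.edgeSet := R₂.edges_subset_edgeSet he
        rw [hGdef, SimpleGraph.edgeSet_fromEdgeSet] at heG
        rw [SimpleGraph.edgeSet_fromEdgeSet]
        refine ⟨?_, heG.2⟩
        rcases heG.1 with h | h
        · refine Or.inl ⟨h, ?_⟩
          intro hepq
          rw [Set.mem_singleton_iff] at hepq
          apply hqR
          exact SimpleGraph.Walk.snd_mem_support_of_mem_edges R₂ (by rwa [hepq] at he)
        · exact Or.inr h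
      exact ⟨(R₂.transfer _ htrans).reverse⟩

/-- replacing the edge `pq` by `qy` for a suitable `y` yields another red matching of the
same size avoiding `a` and `b` -/
lemma modify [Fintype V] {k : ℕ} {Mc : Fin k → Set (Sym2 V)}
    (hconf : ∀ j, IsMatchingE (Mc j)) {M : Set (Sym2 V)}
    (hred : IsRedMatching Mc M) {a b p q y : V}
    (ha : a ∉ covered M) (hb : b ∉ covered M) (hpq : s(p, q) ∈ M)
    (hy : y ∉ covered M) (hya : y ≠ a) (hyb : y ≠ b)
    (hgood : ∀ j, ¬ (SimpleGraph.fromEdgeSet ((M \ {s(p, q)}) ∪ Mc j)).Reachable q y) :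
    IsRedMatching Mc (insert s(q, y) (M \ {s(p, q)})) ∧
      (insert s(q, y) (M \ {s(p, q)})).ncard = M.ncard ∧
      a ∉ covered (insert s(q, y) (M \ {s(p, q)})) ∧
      b ∉ covered (insert s(q, y) (M \ {s(p, q)})) := by
  classical
  obtain ⟨hMm, hMav, hMac⟩ := hred
  have hqcov : q ∈ covered M := ⟨s(p, q), hpq, Sym2.mem_mk_right p q⟩
  have hqy : q ≠ y := fun h => hy (h ▸ hqcov)
  have hqp : s(q, p) ∈ M := by rwa [Sym2.eq_swap] at hpq
  have hqnc : q ∉ covered (M \ {s(p, q)}) := by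
    rintro ⟨e, ⟨heM, hepq⟩, hqe⟩
    apply hepq
    rw [hMm.edge_eq hqp heM hqe, Sym2.eq_swap]
    rfl
  have hsqyM : s(q, y) ∉ M := fun h => hy ⟨_, h, Sym2.mem_mk_right q y⟩
  have hcovsub : covered (M \ {s(p, q)}) ⊆ covered M := covered_mono Set.diff_subset
  have hmemqy : ∀ v : V, v ∈ (s(q, y) : Sym2 V) → v = q ∨ v = y := by
    intro v hv
    rwa [Sym2.mem_iff] at hv
  have hmatch : IsMatchingE (insert s(q, y) (M \ {s(p, q)})) := by
    constructor
    · rintro e (rfl | ⟨heM, -⟩)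
      · simpa [Sym2.mk_isDiag_iff] using hqy
      · exact hMm.1 e heM
    · rintro e he f hf hef v hve hvf
      rcases he with rfl | heM
      · rcases hf with rfl | hfM
        · exact hef rfl
        · rcases hmemqy v hve with rfl | rfl
          · exact hqnc ⟨f, hfM, hvf⟩
          · exact hy (hcovsub ⟨f, hfM, hvf⟩)
      · rcases hf with rfl | hfM
        · rcases hmemqy v hvf with rfl | rfl
          · exact hqnc ⟨e, heM, hve⟩
          · exact hy (hcovsub ⟨e, heM, hve⟩)
        · exact hMm.2 e heM.1 f hfM.1 hef v hve hvf
  have hHadj : ∀ j, s(q, y) ∈ Mc j ∨ s(q, y) ∈ M \ {s(p, q)} →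
      (SimpleGraph.fromEdgeSet ((M \ {s(p, q)}) ∪ Mc j)).Reachable q y := by
    intro j hj
    refine SimpleGraph.Adj.reachable ?_
    rw [SimpleGraph.fromEdgeSet_adj]
    exact ⟨hj.elim Or.inr Or.inl, hqy⟩
  refine ⟨⟨hmatch, ?_, ?_⟩, ?_, ?_, ?_⟩
  · rintro e (rfl | ⟨heM, -⟩)
    · refine ⟨by simpa [Sym2.mk_isDiag_iff] using hqy, ?_⟩
      intro j hj
      exact hgood j (hHadj j (Or.inl hj))
    · exact hMav e heM
  · intro j
    have hunion : insert s(q, y) (M \ {s(p, q)}) ∪ Mc j =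
        ((M \ {s(p, q)}) ∪ Mc j) ∪ {s(q, y)} := by
      ext e
      simp only [Set.mem_insert_iff, Set.mem_union, Set.mem_singleton_iff]
      tauto
    rw [hunion, SimpleGraph.fromEdgeSet_union]
    exact isAcyclic_add_edge
      (isAcyclic_mono (SimpleGraph.fromEdgeSet_mono
        (Set.union_subset_union_left _ Set.diff_subset)) (hMac j))
      (hgood j)
  · rw [Set.ncard_insert_of_notMem (fun h => hsqyM h.1) (Set.toFinite _)]
    exact Set.ncard_diff_singleton_add_one hpq (Set.toFinite _)
  · rw [covered_insert]
    rintro (hmem | hmem)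
    · rcases hmemqy a hmem with rfl | rfl
      · exact ha hqcov
      · exact hya rfl
    · exact ha (hcovsub hmem)
  · rw [covered_insert]
    rintro (hmem | hmem)
    · rcases hmemqy b hmem with rfl | rfl
      · exact hb hqcov
      · exact hyb rfl
    · exact hb (hcovsub hmem)

/-- For `k ≥ 2` there are `c = c(k)` and `D₀ = D₀(k)` such that for every
`D ≥ D₀` there is `n₀` such that for all even `n ≥ n₀`: for any `k`-configuration of order `n`,
any available edge `ab` and any colour `i`, among the red matchings of size `n/2 - D` covering
neither `a` nor `b`, the proportion in which `ab` is `i`-blocked (i.e. `ab` appears in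
colour `i` in the reduced configuration) is at most `c/D`. -/
theorem blocked_proportion (k : ℕ) (hk : 2 ≤ k) :
    ∃ (c : ℝ) (D₀ : ℕ), 0 < c ∧ ∀ D : ℕ, D₀ ≤ D → ∃ n₀ : ℕ,
      ∀ (V : Type) [Fintype V],
        Even (Fintype.card V) → n₀ ≤ Fintype.card V →
        ∀ Mc : Fin k → Set (Sym2 V), IsConfig Mc →
        ∀ a b : V, a ≠ b → Available Mc s(a, b) →
        ∀ i : Fin k,
          ({M : Set (Sym2 V) | IsRedMatching Mc M ∧ M.ncard = Fintype.card V / 2 - D ∧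
              a ∉ covered M ∧ b ∉ covered M ∧ s(a, b) ∈ reducedColour (Mc i) M}.ncard : ℝ) ≤
            c / (D : ℝ) *
              ({M : Set (Sym2 V) | IsRedMatching Mc M ∧ M.ncard = Fintype.card V / 2 - D ∧
                  a ∉ covered M ∧ b ∉ covered M}.ncard : ℝ) := by
  classical
  refine ⟨1, k + 3, one_pos, ?_⟩
  intro D hD
  refine ⟨4 * D + 4, ?_⟩
  intro V _ heven hn Mc hconf a b hab hav i
  set n := Fintype.card V with hndef
  set Bs : Set (Set (Sym2 V)) :=
    {M : Set (Sym2 V) | IsRedMatching Mc M ∧ M.ncard = n / 2 - D ∧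
      a ∉ covered M ∧ b ∉ covered M ∧ s(a, b) ∈ reducedColour (Mc i) M} with hBsdef
  set Zs : Set (Set (Sym2 V)) :=
    {M : Set (Sym2 V) | IsRedMatching Mc M ∧ M.ncard = n / 2 - D ∧
      a ∉ covered M ∧ b ∉ covered M} with hZsdef
  obtain ⟨t, ht⟩ := heven
  have hDt : D + 2 ≤ t := by omega
  have hn2 : n / 2 = t := by omega
  -- the partner of b in colour i
  obtain ⟨q, hqb⟩ := mem_covered_iff.1 ((hconf i).2 b)
  have hnotMi : s(a, b) ∉ Mc i := hav.2 i
  have hqcovMi : q ∈ (s(b, q) : Sym2 V) := Sym2.mem_mk_right b q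
  -- the structural data for each blocked matching
  have hPex : ∀ M ∈ Bs, ∃ p, s(p, q) ∈ M ∧
      (SimpleGraph.fromEdgeSet ((M \ {s(p, q)}) ∪ Mc i)).Reachable a p := by
    intro M hM
    obtain ⟨hred, hcard, haM, hbM, hblk⟩ := hM
    obtain ⟨u, v, huv, hne, hu, hv, hr⟩ := hblk
    have hreach : (SimpleGraph.fromEdgeSet (Mc i ∪ M)).Reachable a b := by
      rw [Sym2.eq_iff] at huv
      rcases huv with ⟨rfl, rfl⟩ | ⟨rfl, rfl⟩
      · exact hr
      · exact hr.symm
    rw [Set.union_comm] at hreach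
    exact forward_structure (hconf i).1 hred.1 (hred.2.2 i) hab haM hbM hnotMi hqb hreach
  have hNV : Nonempty V := Fintype.card_pos_iff.mp (by omega)
  set pfun : Set (Sym2 V) → V := fun M => Classical.epsilon
    (fun p => s(p, q) ∈ M ∧
      (SimpleGraph.fromEdgeSet ((M \ {s(p, q)}) ∪ Mc i)).Reachable a p) with hpfundef
  have hPp : ∀ M ∈ Bs, s(pfun M, q) ∈ M ∧
      (SimpleGraph.fromEdgeSet ((M \ {s(pfun M, q)}) ∪ Mc i)).Reachable a (pfun M) :=
    fun M hM => Classical.epsilon_spec (hPex M hM)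
  -- the set of good replacement vertices for a blocked matching
  set good : Set (Sym2 V) → Set V := fun M =>
    {y | y ∉ covered M ∧ y ≠ a ∧ y ≠ b ∧ ∀ j,
      ¬ (SimpleGraph.fromEdgeSet ((M \ {s(pfun M, q)}) ∪ Mc j)).Reachable q y} with hgooddef
  -- `good M` is large
  have hgoodcard : ∀ M ∈ Bs, D ≤ (good M).ncard := by
    intro M hM
    have hMB : M ∈ Bs := hM
    obtain ⟨hred, hcard, haM, hbM, hblk⟩ := hM
    have hpq : s(pfun M, q) ∈ M := (hPp M hMB).1
    have hqcovM : q ∈ covered M := ⟨_, hpq, Sym2.mem_mk_right _ q⟩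
    have hqp : s(q, pfun M) ∈ M := by rwa [Sym2.eq_swap] at hpq
    have hqnc : q ∉ covered (M \ {s(pfun M, q)}) := by
      rintro ⟨e, ⟨heM, hepq⟩, hqe⟩
      apply hepq
      rw [hred.1.edge_eq hqp heM hqe, Sym2.eq_swap]
      rfl
    -- the uncovered set has `2 D` elements
    have hUcard : {y : V | y ∉ covered M}.ncard = 2 * D := by
      have h1 : (covered M).ncard = 2 * (t - D) := by
        rw [ncard_covered_of_matching hred.1, hcard, hn2]
      have h2 := Set.ncard_add_ncard_compl (covered M) (Set.toFinite _) (Set.toFinite _)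
      have h3 : Nat.card V = n := by rw [Nat.card_eq_fintype_card]
      have h4 : {y : V | y ∉ covered M} = (covered M)ᶜ := rfl
      rw [h4]
      omega
    -- each colour contributes at most one bad vertex
    have hbadsub : ∀ j : Fin k, {y : V | y ∉ covered M ∧
        (SimpleGraph.fromEdgeSet ((M \ {s(pfun M, q)}) ∪ Mc j)).Reachable q y}.Subsingleton := by
      intro j y₁ hy₁ y₂ hy₂
      by_contra hne
      have hcov : covered (M \ {s(pfun M, q)}) ⊆ covered M := covered_mono Set.diff_subset
      have hNm : IsMatchingE (M \ {s(pfun M, q)}) := hred.1.mono Set.diff_subset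
      have hqy₁ : q ≠ y₁ := fun h => hy₁.1 (h ▸ hqcovM)
      have hqy₂ : q ≠ y₂ := fun h => hy₂.1 (h ▸ hqcovM)
      exact three_leaves (max_deg_two hNm (hconf j).1)
        (leaf_of_uncovered hNm (hconf j).1 hqnc)
        (leaf_of_uncovered hNm (hconf j).1 (fun h => hy₁.1 (hcov h)))
        (leaf_of_uncovered hNm (hconf j).1 (fun h => hy₂.1 (hcov h)))
        hqy₁ hqy₂ hne hy₁.2 hy₂.2
    -- cover the uncovered set
    set badU : Set V := {y : V | ∃ j : Fin k, y ∉ covered M ∧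
        (SimpleGraph.fromEdgeSet ((M \ {s(pfun M, q)}) ∪ Mc j)).Reachable q y} with hbadUdef
    have hbadUcard : badU.ncard ≤ k := by
      haveI : Nonempty (Fin k) := ⟨⟨0, by omega⟩⟩
      have hinj : Set.InjOn (fun y => if h : ∃ j : Fin k, y ∉ covered M ∧
          (SimpleGraph.fromEdgeSet ((M \ {s(pfun M, q)}) ∪ Mc j)).Reachable q y
          then h.choose else Classical.arbitrary (Fin k)) badU := by
        intro y₁ hy₁ y₂ hy₂ hf
        rw [hbadUdef] at hy₁ hy₂
        simp only [Set.mem_setOf_eq] at hy₁ hy₂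
        simp only [dif_pos hy₁, dif_pos hy₂] at hf
        have h₁ := hy₁.choose_spec
        have h₂ := hy₂.choose_spec
        rw [hf] at h₁
        exact hbadsub _ ⟨h₁.1, h₁.2⟩ ⟨h₂.1, h₂.2⟩
      have hle := Set.ncard_le_ncard_of_injOn (s := badU) (t := (Set.univ : Set (Fin k)))
        _ (fun y _ => Set.mem_univ _) hinj (Set.toFinite _)
      simpa [Set.ncard_univ] using hle
    have hcover : {y : V | y ∉ covered M} ⊆ good M ∪ ({a, b} ∪ badU) := by
      intro y hy
      by_cases hgm : y ∈ good M
      · exact Or.inl hgm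
      · refine Or.inr ?_
        rw [hgooddef] at hgm
        simp only [Set.mem_setOf_eq, not_and, not_forall, not_not] at hgm
        by_cases hya : y = a
        · exact Or.inl (Or.inl hya)
        by_cases hyb : y = b
        · exact Or.inl (Or.inr hyb)
        obtain ⟨j, hj⟩ := hgm hy hya hyb
        exact Or.inr ⟨j, hy, hj⟩
    have hc1 : {y : V | y ∉ covered M}.ncard ≤
        (good M).ncard + (({a, b} : Set V).ncard + badU.ncard) :=
      le_trans (Set.ncard_le_ncard hcover (Set.toFinite _))
        (le_trans (Set.ncard_union_le _ _)
          (by gcongr; exact Set.ncard_union_le _ _))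
    have hab2 : ({a, b} : Set V).ncard = 2 := Set.ncard_pair hab
    omega
  -- the swap map
  set Φ : Set (Sym2 V) × V → Set (Sym2 V) :=
    fun My => insert s(q, My.2) (My.1 \ {s(pfun My.1, q)}) with hΦdef
  have hΦmem : ∀ M ∈ Bs, ∀ y ∈ good M, Φ (M, y) ∈ Zs := by
    intro M hM y hy
    have hMB : M ∈ Bs := hM
    obtain ⟨hred, hcard, haM, hbM, hblk⟩ := hM
    obtain ⟨hmod1, hmod2, hmod3, hmod4⟩ := modify (fun j => (hconf j).1)
      hred haM hbM (hPp M hMB).1 hy.1 hy.2.1 hy.2.2.1 (fun j hr => hy.2.2.2 j hr)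
    exact ⟨hmod1, by rw [hmod2, hcard], hmod3, hmod4⟩
  -- injectivity of the swap map
  have hΦinj : ∀ M₁ ∈ Bs, ∀ y₁ ∈ good M₁, ∀ M₂ ∈ Bs, ∀ y₂ ∈ good M₂,
      Φ (M₁, y₁) = Φ (M₂, y₂) → (M₁, y₁) = (M₂, y₂) := by
    intro M₁ hM₁ y₁ hy₁ M₂ hM₂ y₂ hy₂ heq
    have hpq₁ : s(pfun M₁, q) ∈ M₁ := (hPp M₁ hM₁).1
    have hpq₂ : s(pfun M₂, q) ∈ M₂ := (hPp M₂ hM₂).1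
    have hre₁ := (hPp M₁ hM₁).2
    have hre₂ := (hPp M₂ hM₂).2
    have hqcov₁ : q ∈ covered M₁ := ⟨_, hpq₁, Sym2.mem_mk_right _ q⟩
    have hqy₁ : q ≠ y₁ := fun h => hy₁.1 (h ▸ hqcov₁)
    have hqy₂ : q ≠ y₂ := fun h => hy₂.1 (h ▸ ⟨_, hpq₂, Sym2.mem_mk_right _ q⟩)
    have hM'red : IsRedMatching Mc (Φ (M₁, y₁)) := (hΦmem M₁ hM₁ y₁ hy₁).1
    have hm₁ : s(q, y₁) ∈ Φ (M₁, y₁) := Set.mem_insert _ _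
    have hm₂ : s(q, y₂) ∈ Φ (M₁, y₁) := by
      rw [heq]; exact Set.mem_insert _ _
    have hyy : y₂ = y₁ := by
      have := hM'red.1.edge_eq hm₁ hm₂ (Sym2.mem_mk_left q y₂)
      rw [Sym2.eq_iff] at this
      rcases this with ⟨-, h⟩ | ⟨h1, h2⟩
      · exact h
      · exact h2.trans h1
    subst hyy
    have hsqy₁ : s(q, y₂) ∉ M₁ \ {s(pfun M₁, q)} := by
      intro h
      exact hy₁.1 ⟨_, h.1, Sym2.mem_mk_right q y₂⟩
    have hsqy₂ : s(q, y₂) ∉ M₂ \ {s(pfun M₂, q)} := by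
      intro h
      exact hy₂.1 ⟨_, h.1, Sym2.mem_mk_right q y₂⟩
    have hN : M₁ \ {s(pfun M₁, q)} = M₂ \ {s(pfun M₂, q)} := by
      have h1 := Set.insert_diff_self_of_notMem hsqy₁
      have h2 := Set.insert_diff_self_of_notMem hsqy₂
      rw [← h1, ← h2]
      have : insert s(q, y₂) (M₁ \ {s(pfun M₁, q)}) =
          insert s(q, y₂) (M₂ \ {s(pfun M₂, q)}) := heq
      rw [this]
    have hpp : pfun M₁ = pfun M₂ := by
      by_contra hpp
      have hNm : IsMatchingE (M₁ \ {s(pfun M₁, q)}) := by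
        obtain ⟨hred, -, -, -, -⟩ := hM₁
        exact hred.1.mono Set.diff_subset
      have haM₁ : a ∉ covered M₁ := by
        obtain ⟨-, -, h, -, -⟩ := hM₁; exact h
      have haM₂ : a ∉ covered M₂ := by
        obtain ⟨-, -, h, -, -⟩ := hM₂; exact h
      have hp₁cov : pfun M₁ ∈ covered M₁ := ⟨_, hpq₁, Sym2.mem_mk_left _ q⟩
      have hp₂cov : pfun M₂ ∈ covered M₂ := ⟨_, hpq₂, Sym2.mem_mk_left _ q⟩
      have hap₁ : a ≠ pfun M₁ := fun h => haM₁ (h ▸ hp₁cov)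
      have hap₂ : a ≠ pfun M₂ := fun h => haM₂ (h ▸ hp₂cov)
      have hleaf₁ : pfun M₁ ∉ covered (M₁ \ {s(pfun M₁, q)}) := by
        rintro ⟨e, ⟨heM, hepq⟩, hpe⟩
        exact hepq (by obtain ⟨hred, -, -, -, -⟩ := hM₁
                       exact hred.1.edge_eq hpq₁ heM hpe)
      have hleaf₂ : pfun M₂ ∉ covered (M₁ \ {s(pfun M₁, q)}) := by
        rw [hN]
        rintro ⟨e, ⟨heM, hepq⟩, hpe⟩
        exact hepq (by obtain ⟨hred, -, -, -, -⟩ := hM₂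
                       exact hred.1.edge_eq hpq₂ heM hpe)
      have hre₂' : (SimpleGraph.fromEdgeSet ((M₁ \ {s(pfun M₁, q)}) ∪ Mc i)).Reachable
          a (pfun M₂) := by
        rw [hN]; exact hre₂
      have haleaf : a ∉ covered (M₁ \ {s(pfun M₁, q)}) :=
        fun h => haM₁ (covered_mono Set.diff_subset h)
      exact three_leaves (max_deg_two hNm (hconf i).1)
        (leaf_of_uncovered hNm (hconf i).1 haleaf)
        (leaf_of_uncovered hNm (hconf i).1 hleaf₁)
        (leaf_of_uncovered hNm (hconf i).1 hleaf₂)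
        hap₁ hap₂ hpp hre₁ hre₂'
    have hM12 : M₁ = M₂ := by
      have h1 : M₁ = insert s(pfun M₁, q) (M₁ \ {s(pfun M₁, q)}) := by
        rw [Set.insert_diff_singleton, Set.insert_eq_self.2 hpq₁]
      have h2 : M₂ = insert s(pfun M₂, q) (M₂ \ {s(pfun M₂, q)}) := by
        rw [Set.insert_diff_singleton, Set.insert_eq_self.2 hpq₂]
      rw [h1, h2, hN, hpp]
    rw [hM12]
  -- double counting
  have hBfin : Bs.Finite := Set.toFinite _
  have hZfin : Zs.Finite := Set.toFinite _
  set Sf : Finset (Set (Sym2 V) × V) :=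
    hBfin.toFinset.biUnion
      (fun M => {M} ×ˢ (Set.toFinite (good M)).toFinset) with hSfdef
  have hSmem : ∀ x ∈ Sf, x.1 ∈ Bs ∧ x.2 ∈ good x.1 := by
    intro x hx
    rw [hSfdef, Finset.mem_biUnion] at hx
    obtain ⟨M, hMBf, hx⟩ := hx
    rw [Finset.mem_product, Finset.mem_singleton] at hx
    rw [Set.Finite.mem_toFinset] at hMBf
    refine ⟨hx.1 ▸ hMBf, ?_⟩
    have := (Set.Finite.mem_toFinset _).1 hx.2
    rwa [hx.1]
  have hSlow : hBfin.toFinset.card * D ≤ Sf.card := by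
    rw [hSfdef, Finset.card_biUnion]
    · refine le_trans ?_ (Finset.card_nsmul_le_sum _ _ D ?_)
      · simp [smul_eq_mul]
      · intro M hM
        rw [Set.Finite.mem_toFinset] at hM
        have := hgoodcard M hM
        rw [Set.ncard_eq_toFinset_card _ (Set.toFinite _)] at this
        simpa [Finset.card_product] using this
    · intro M₁ h₁ M₂ h₂ hne
      rw [Function.onFun, Finset.disjoint_left]
      intro x hx hx'
      rw [Finset.mem_product, Finset.mem_singleton] at hx hx'
      exact hne (hx.1 ▸ hx'.1 ▸ rfl)
  have hSup : Sf.card ≤ hZfin.toFinset.card := by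
    refine Finset.card_le_card_of_injOn Φ ?_ ?_
    · intro x hx
      obtain ⟨hx1, hx2⟩ := hSmem x hx
      rw [Finset.mem_coe, Set.Finite.mem_toFinset]
      have := hΦmem x.1 hx1 x.2 hx2
      rwa [Prod.mk.eta] at this
    · intro x₁ h₁ x₂ h₂ heq
      rw [Finset.mem_coe] at h₁ h₂
      obtain ⟨ha1, ha2⟩ := hSmem x₁ h₁
      obtain ⟨hb1, hb2⟩ := hSmem x₂ h₂
      have := hΦinj x₁.1 ha1 x₁.2 ha2 x₂.1 hb1 x₂.2 hb2
        (by rwa [Prod.mk.eta, Prod.mk.eta])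
      rwa [Prod.mk.eta, Prod.mk.eta] at this
  have hnat : D * Bs.ncard ≤ Zs.ncard := by
    rw [Set.ncard_eq_toFinset_card Bs hBfin, Set.ncard_eq_toFinset_card Zs hZfin]
    calc D * hBfin.toFinset.card = hBfin.toFinset.card * D := mul_comm _ _
      _ ≤ Sf.card := hSlow
      _ ≤ hZfin.toFinset.card := hSup
  have hDpos : (0 : ℝ) < (D : ℝ) := by
    have : 0 < D := by omega
    exact_mod_cast this
  rw [div_mul_eq_mul_div, one_mul, le_div_iff₀ hDpos]
  have : (Bs.ncard : ℝ) * (D : ℝ) = ((Bs.ncard * D : ℕ) : ℝ) := by push_cast; ring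
  rw [this]
  exact_mod_cast (mul_comm D Bs.ncard ▸ hnat)


end Kotzig
end
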